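/- arXiv:1802.07075 — 6 statements merged into one kernel-verified Lean document; each statement's English description precedes it below -/
import Mathlib

section
/- Let T^1, …, T^{r−1} ∈ K be such that the Laurent series x − k − (1/r)·Σ_{β=1}^{r−1} T^β·k^{−(r−β)} lies in y^r·K[[y]] (this is the defining expansion of the flat coordinates T^β of the Saito Frobenius manifold of the A_{r−1}-singularity). Then v_α = −(α/r)·T^{r−α} for every 1 ≤ α ≤ r−1. -/
/-!
Pair the defining expansion with `d(k^α)` and take residues, i.e. coefficients of `y⁻¹`. The
expansion is `O(y^r)` and `d(k^α) = O(y^(-α-1))`, so the residue of the product vanishes. Termwise,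
`Res (x · d(k^α)) = v_α`, while for `e ≠ -α` the form `k^e · d(k^α) = α/(e+α) · d(k^(e+α))` is
exact and has no residue; the remaining term is `α · k⁻¹ dk`, whose residue is `-α` because `k` has
order `-1`. Hence `v_α + (α/r) T^(r-α) = 0`.
-/

namespace HahnSeries

variable {Γ R : Type*} [AddCommMonoid Γ] [LinearOrder Γ] [IsOrderedCancelAddMonoid Γ] [Semiring R]

theorem coeff_mul_eq_zero_of_lt {x y : R⟦Γ⟧} {a b g : Γ} (hx : ∀ i < a, x.coeff i = 0)
    (hy : ∀ j < b, y.coeff j = 0) (hg : g < a + b) : (x * y).coeff g = 0 := by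
  refine coeff_eq_zero_of_lt_orderTop (lt_of_lt_of_le ?_ orderTop_add_le_mul)
  have ha : (a : WithTop Γ) ≤ x.orderTop :=
    le_orderTop_iff_forall.2 fun i hi => hx i (WithTop.coe_lt_coe.1 hi)
  have hb : (b : WithTop Γ) ≤ y.orderTop :=
    le_orderTop_iff_forall.2 fun j hj => hy j (WithTop.coe_lt_coe.1 hj)
  exact lt_of_lt_of_le (WithTop.coe_lt_coe.2 hg) (add_le_add ha hb)

end HahnSeries

namespace LaurentSeries

open HahnSeries PowerSeries

variable {R : Type*} [CommRing R]

theorem derivative_coeff (f : R⸨X⸩) (n : ℤ) :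
    (derivative R f).coeff n = (n + 1) * f.coeff (n + 1) := by
  simp [zsmul_eq_mul]

theorem derivative_coeff_neg_one (f : R⸨X⸩) : (derivative R f).coeff (-1) = 0 := by
  simp

theorem coeff_neg_one_single_neg_one_mul_derivative (f : R⸨X⸩) :
    (single (-1) 1 * derivative R f).coeff (-1) = f.coeff 1 := by
  rw [coeff_single_mul, one_mul, sub_self, derivative_coeff]
  norm_num

theorem coeff_intCast_mul (j : ℤ) (f : R⸨X⸩) (n : ℤ) :
    ((j : R⸨X⸩) * f).coeff n = j * f.coeff n := by
  rw [← map_intCast (HahnSeries.C : R →+* R⸨X⸩), C_mul_eq_smul, HahnSeries.coeff_smul,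
    smul_eq_mul]

theorem coeff_single_one_mul_coe_of_lt {n i : ℤ} (P : R⟦X⟧) (hi : i < n) :
    (single n 1 * (P : R⸨X⸩)).coeff i = 0 := by
  rw [coeff_single_mul, one_mul, coeff_coe, if_pos (by omega)]

theorem derivative_coe (P : R⟦X⟧) : derivative R (P : R⸨X⸩) = (d⁄dX R P : R⸨X⸩) := by
  ext n
  rw [derivative_coeff, coeff_coe, coeff_coe]
  rcases lt_trichotomy n (-1) with h | rfl | h
  · simp [show n + 1 < 0 by omega, show n < 0 by omega]
  · simp
  · lift n to ℕ using (by omega)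
    simp only [show ¬ ((n : ℤ) + 1 < 0) by omega, show ¬ ((n : ℤ) < 0) by omega, if_false,
      coeff_derivative]
    rw [show ((n : ℤ) + 1).natAbs = n + 1 by omega, Int.natAbs_natCast]
    push_cast
    ring

theorem derivative_single_one_mul (n : ℤ) (f : R⸨X⸩) :
    derivative R (single n 1 * f) = single (n - 1) (n : R) * f + single n 1 * derivative R f := by
  ext m
  simp only [derivative_coeff, coeff_add, coeff_single_mul, one_mul]
  rw [show m + 1 - n = m - (n - 1) by ring, show m - n + 1 = m - (n - 1) by ring]
  push_cast
  ring

theorem coeff_derivative_pow_eq_zero_of_lt {n j : ℤ} (P : R⟦X⟧) (m : ℕ) (hj : j < n * m - 1) :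
    (derivative R ((single n 1 * (P : R⸨X⸩)) ^ m)).coeff j = 0 := by
  rw [derivative_coeff, mul_pow, single_pow, one_pow, ← map_pow,
    coeff_single_one_mul_coe_of_lt _ (by rw [nsmul_eq_mul]; linarith), mul_zero]

theorem single_sub_one_intCast (n : ℤ) :
    (single (n - 1) (n : R) : R⸨X⸩) = HahnSeries.C (n : R) * single n 1 * single (-1) 1 := by
  rw [HahnSeries.C_apply, single_mul_single, single_mul_single]
  simp [sub_eq_add_neg]

theorem derivative_mul (f g : R⸨X⸩) :
    derivative R (f * g) = f * derivative R g + g * derivative R f := by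
  suffices key : ∀ (a b : ℤ) (P Q : R⟦X⟧),
      derivative R (single a 1 * (P : R⸨X⸩) * (single b 1 * (Q : R⸨X⸩))) =
        single a 1 * (P : R⸨X⸩) * derivative R (single b 1 * (Q : R⸨X⸩)) +
          single b 1 * (Q : R⸨X⸩) * derivative R (single a 1 * (P : R⸨X⸩)) by
    rw [← single_order_mul_powerSeriesPart f, ← single_order_mul_powerSeriesPart g]
    exact key _ _ _ _
  intro a b P Q
  have hprod : single a 1 * (P : R⸨X⸩) * (single b 1 * (Q : R⸨X⸩)) =
      single (a + b) 1 * ((P * Q : R⟦X⟧) : R⸨X⸩) := by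
    rw [mul_mul_mul_comm, single_mul_single, coe_mul, one_mul]
  have hsingle : (single (a + b) 1 : R⸨X⸩) = single a 1 * single b 1 := by
    rw [single_mul_single, one_mul]
  simp only [hprod, derivative_single_one_mul, derivative_coe, Derivation.leibniz, smul_eq_mul,
    single_sub_one_intCast]
  simp only [coe_mul, Int.cast_add, map_add, hsingle]
  ring

def derivation : Derivation R R⸨X⸩ R⸨X⸩ where
  toFun := derivative R
  map_add' := map_add _
  -- `Algebra R R⸨X⸩` factors through `R⟦X⟧`, so its scalar action is only propositionally
  -- equal to the coefficientwise one for which `derivative` is linear.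
  map_smul' c f := by
    rw [RingHom.id_apply, Algebra.smul_def, derivative_mul, HahnSeries.algebraMap_apply',
      derivative_coe, Derivation.map_algebraMap, map_zero, mul_zero, add_zero,
      ← HahnSeries.C_mul_eq_smul]
    simp
  map_one_eq_zero' := by
    show derivative R 1 = 0
    rw [← map_one (ofPowerSeries ℤ R), derivative_coe, Derivation.map_one_eq_zero, map_zero]
  leibniz' f g := derivative_mul f g

@[simp]
theorem derivation_apply (f : R⸨X⸩) : derivation f = derivative R f := rfl

section Field

variable {K : Type*} [Field K]

theorem coeff_neg_one_inv_mul_derivative (n : ℤ) {P : K⟦X⟧} (hP : constantCoeff P ≠ 0) :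
    ((single n 1 * (P : K⸨X⸩))⁻¹ * derivative K (single n 1 * (P : K⸨X⸩))).coeff (-1) =
      (n : K) := by
  have hinv : (single n 1 * (P : K⸨X⸩))⁻¹ = single (-n) 1 * ((P⁻¹ : K⟦X⟧) : K⸨X⸩) := by
    refine inv_eq_of_mul_eq_one_right ?_
    rw [mul_mul_mul_comm, single_mul_single, ← coe_mul, PowerSeries.mul_inv_cancel P hP]
    simp
  have hcancel : (single (-n) 1 : K⸨X⸩) * single n 1 = 1 := by
    rw [single_mul_single]
    simp
  have hPP : ((P⁻¹ : K⟦X⟧) : K⸨X⸩) * P = 1 := by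
    rw [← coe_mul, PowerSeries.inv_mul_cancel P hP, coe_one]
  have hlog : (single (-n) 1 * ((P⁻¹ : K⟦X⟧) : K⸨X⸩)) *
        (HahnSeries.C (n : K) * single n 1 * single (-1) 1 * (P : K⸨X⸩) +
          single n 1 * (d⁄dX K P : K⸨X⸩)) =
      HahnSeries.C (n : K) * single (-1) 1 + ((P⁻¹ * d⁄dX K P : K⟦X⟧) : K⸨X⸩) := by
    rw [coe_mul]
    linear_combination (HahnSeries.C (n : K) * single (-1) 1 * ((P⁻¹ : K⟦X⟧) : K⸨X⸩) *
        (P : K⸨X⸩) + ((P⁻¹ : K⟦X⟧) : K⸨X⸩) * (d⁄dX K P : K⸨X⸩)) * hcancel +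
      HahnSeries.C (n : K) * single (-1) 1 * hPP
  rw [hinv, derivative_single_one_mul, derivative_coe, single_sub_one_intCast, hlog, coeff_add,
    HahnSeries.C_mul_eq_smul, HahnSeries.coeff_smul, coeff_coe]
  simp

variable [CharZero K]

theorem coeff_neg_one_zpow_sub_one_mul_derivative (f : K⸨X⸩) {j : ℤ} (hj : j ≠ 0) :
    (f ^ (j - 1) * derivative K f).coeff (-1) = 0 := by
  have h := derivation.leibniz_zpow f j
  simp only [derivation_apply, zsmul_eq_mul, smul_eq_mul] at h
  have h' := congrArg (HahnSeries.coeff · (-1)) h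
  simp only [derivative_coeff_neg_one, coeff_intCast_mul] at h'
  exact (mul_eq_zero.1 h'.symm).resolve_left (Int.cast_ne_zero.2 hj)

theorem coeff_neg_one_zpow_mul_derivative_zpow {n : ℤ} {P : K⟦X⟧} (hP : constantCoeff P ≠ 0)
    (e m : ℤ) :
    ((single n 1 * (P : K⸨X⸩)) ^ e * derivative K ((single n 1 * (P : K⸨X⸩)) ^ m)).coeff (-1) =
      if e + m = 0 then (m * n : K) else 0 := by
  have hf : single n 1 * (P : K⸨X⸩) ≠ 0 :=
    mul_ne_zero (single_ne_zero one_ne_zero)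
      ((map_ne_zero_iff _ ofPowerSeries_injective).2 fun h => hP (by simp [h]))
  set f := single n 1 * (P : K⸨X⸩)
  have hchain : f ^ e * derivative K (f ^ m) =
      (m : K⸨X⸩) * (f ^ (e + m - 1) * derivative K f) := by
    rw [← derivation_apply, Derivation.leibniz_zpow, zsmul_eq_mul, smul_eq_mul, derivation_apply,
      show e + m - 1 = e + (m - 1) by ring, zpow_add₀ hf]
    ring
  rw [hchain, coeff_intCast_mul]
  split_ifs with h
  · rw [h, zero_sub, zpow_neg_one, coeff_neg_one_inv_mul_derivative n hP]
  · rw [coeff_neg_one_zpow_sub_one_mul_derivative f h, mul_zero]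

end Field

end LaurentSeries

theorem flat_coordinates_of_A_singularity_general
    (K : Type*) [Field K] [CharZero K] (r : ℕ)
    (u : PowerSeries K)
    (hu1 : PowerSeries.constantCoeff u = 1)
    (k : LaurentSeries K)
    (hk : k = HahnSeries.single (-1 : ℤ) (1 : K) * HahnSeries.ofPowerSeries ℤ K u)
    (v : ℕ → K) (hv : ∀ α : ℕ, v α = (k ^ α).coeff 1)
    (T : ℕ → K)
    (hT : ∀ n : ℤ, n < (r : ℤ) →
      (HahnSeries.single (-1 : ℤ) (1 : K) - k
        - HahnSeries.C ((r : K))⁻¹ *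
            ∑ β ∈ Finset.Icc 1 (r - 1),
              HahnSeries.C (T β) * k ^ (-((r : ℤ) - (β : ℤ)))).coeff n = 0) :
    ∀ α : ℕ, 1 ≤ α → α ≤ r - 1 → v α = -((α : K) / (r : K)) * T (r - α) := by
  intro α hα hαr
  have hu : PowerSeries.constantCoeff u ≠ 0 := hu1 ▸ one_ne_zero
  have hres (e : ℤ) : (k ^ e * LaurentSeries.derivative K (k ^ α)).coeff (-1) =
      if e + α = 0 then -(α : K) else 0 := by
    rw [← zpow_natCast, hk, LaurentSeries.coeff_neg_one_zpow_mul_derivative_zpow hu]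
    simp
  have hk1 : (k * LaurentSeries.derivative K (k ^ α)).coeff (-1) = 0 := by
    simpa [if_neg (show (1 : ℤ) + α ≠ 0 by omega)] using hres 1
  have hlow : ∀ j < -1 * (α : ℤ) - 1, (LaurentSeries.derivative K (k ^ α)).coeff j = 0 :=
    fun j hj => hk ▸ LaurentSeries.coeff_derivative_pow_eq_zero_of_lt u α hj
  have hpair := HahnSeries.coeff_mul_eq_zero_of_lt hT hlow (by omega : (-1 : ℤ) < r + (-1 * α - 1))
  rw [sub_mul, sub_mul, HahnSeries.coeff_sub, HahnSeries.coeff_sub,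
    LaurentSeries.coeff_neg_one_single_neg_one_mul_derivative, hk1, mul_assoc,
    HahnSeries.C_mul_eq_smul, HahnSeries.coeff_smul, Finset.sum_mul, HahnSeries.coeff_sum] at hpair
  simp_rw [mul_assoc, HahnSeries.C_mul_eq_smul, HahnSeries.coeff_smul, hres] at hpair
  rw [Finset.sum_eq_single_of_mem (r - α) (Finset.mem_Icc.2 ⟨by omega, by omega⟩)
    (fun β _ hβ => by rw [if_neg (by omega), smul_zero]), if_pos (by omega)] at hpair
  have hr : (r : K) ≠ 0 := Nat.cast_ne_zero.2 (by omega)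
  rw [sub_zero, sub_eq_zero, smul_eq_mul, smul_eq_mul, ← hv] at hpair
  rw [hpair]
  field_simp

/-- In the Laurent series field `K((y))` with `x = y⁻¹`, let `k = y⁻¹·u` be the
`r`-th root of the miniversal deformation `W_s` of the `A_{r-1}`-singularity, and let
`v α` be the coefficient of `y¹` in `k^α`.  If `T^1, …, T^{r-1}` are such that
`x − k − (1/r)·∑_{β=1}^{r-1} T^β·k^{−(r−β)}` lies in `y^r·K[[y]]`, then
`v α = −(α/r)·T^{r−α}` for all `1 ≤ α ≤ r−1`. -/
theorem flat_coordinates_of_A_singularity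
    (K : Type*) [Field K] [CharZero K] (r : ℕ) (hr : 2 ≤ r)
    (s : ℕ → K) (u : PowerSeries K)
    (hu1 : PowerSeries.constantCoeff u = 1)
    (hur : u ^ r = 1 + ∑ i ∈ Finset.range (r - 1),
        PowerSeries.C (s i) * PowerSeries.X ^ (r - i))
    (k : LaurentSeries K)
    (hk : k = HahnSeries.single (-1 : ℤ) (1 : K) * HahnSeries.ofPowerSeries ℤ K u)
    (v : ℕ → K) (hv : ∀ α : ℕ, v α = (k ^ α).coeff 1)
    (T : ℕ → K)
    (hT : ∀ n : ℤ, n < (r : ℤ) →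
      (HahnSeries.single (-1 : ℤ) (1 : K) - k
        - HahnSeries.C ((r : K))⁻¹ *
            ∑ β ∈ Finset.Icc 1 (r - 1),
              HahnSeries.C (T β) * k ^ (-((r : ℤ) - (β : ℤ)))).coeff n = 0) :
    ∀ α : ℕ, 1 ≤ α → α ≤ r - 1 → v α = -((α : K) / (r : K)) * T (r - α) :=
  flat_coordinates_of_A_singularity_general K r u hu1 k hk v hv T hT
end

section
/- The Laurent series x − k + Σ_{α=1}^{r−1} (v_α/α)·k^{−α} lies in y^r·K[[y]]; that is, x = k − Σ_{α=1}^{r−1} (v_α/α)·k^{−α} + O(x^{−r}). -/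
/-!
Lagrange inversion by residues. Let `θ = y d/dy` act on `K((y))`. The constant coefficient
of `F * θ G` is the residue of `F dG`; it vanishes on `θ`-derivatives, so that of
`k ^ a * θ (k ^ j)` is `0` unless `a + j = 0`, when it is `j * ord k = -j`. Pairing
`T = x - k + ∑ (v α / α) k ^ (-α)` with `θ (k ^ j)` for `1 ≤ j < r`, the term `x` gives
`v j` (integrate by parts, `θ x = -x`), `k` gives `0` and the sum gives `-v j`. Since
`θ (k ^ j) = -j y ^ (-j) (1 + O(y))`, a `T = O(y ^ j)` pairs to `-j` times its coefficient of
`y ^ j`, so induction on `j` gives `T = O(y ^ r)`. The induction starts from `T = O(y)`, which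
needs `[y⁰] k = [y¹] u = 0`; this follows from `[y¹] (u ^ r) = r [y¹] u`.
-/

namespace HahnSeries

variable {Γ R : Type*} [AddCommMonoid Γ] [LinearOrder Γ]

theorem order_eq_of_coeff_ne_zero [Zero R] {x : HahnSeries Γ R} {a : Γ} (ha : x.coeff a ≠ 0)
    (hlt : ∀ b < a, x.coeff b = 0) : x.order = a :=
  le_antisymm (order_le_of_coeff_ne_zero ha) <| not_lt.1 fun h =>
    coeff_order_eq_zero.not.2 (ne_zero_of_coeff_ne_zero ha) (hlt _ h)

theorem coeff_mul_add_of_forall_lt [IsOrderedCancelAddMonoid Γ] [NonUnitalNonAssocSemiring R]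
    {x y : HahnSeries Γ R} {a b : Γ} (hx : ∀ i < a, x.coeff i = 0)
    (hy : ∀ j < b, y.coeff j = 0) :
    (x * y).coeff (a + b) = x.coeff a * y.coeff b := by
  rw [coeff_mul]
  refine Finset.sum_eq_single (a, b) (fun ij hij hne => ?_) fun hab => ?_
  · obtain ⟨hi, hj, hsum⟩ := Finset.mem_antidiagonal.1 hij
    have ha : a ≤ ij.1 := not_lt.1 fun h => hi (hx _ h)
    have hb : b ≤ ij.2 := not_lt.1 fun h => hj (hy _ h)
    refine absurd (Prod.ext ?_ ?_) hne
    · exact le_antisymm (le_of_add_le_add_right ((add_le_add le_rfl hb).trans hsum.le)) ha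
    · exact le_antisymm (le_of_add_le_add_left ((add_le_add ha le_rfl).trans hsum.le)) hb
  · by_contra h
    exact hab (Finset.mem_antidiagonal.2 ⟨left_ne_zero_of_mul h, right_ne_zero_of_mul h, rfl⟩)

end HahnSeries

namespace LaurentSeries

open HahnSeries Function

section EulerDerivation

variable {R : Type*} [CommRing R]

variable (R) in
def eulerDerivation : Derivation R R⸨X⸩ R⸨X⸩ where
  toFun f := ⟨fun n => n * f.coeff n, f.isPWO_support.mono (support_mul_subset_right _ _)⟩
  map_add' f g := by ext n; exact mul_add _ _ _
  map_smul' c f := by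
    ext n
    simp only [Algebra.smul_def, algebraMap_apply', PowerSeries.algebraMap_eq, ofPowerSeries_C,
      C_apply, single_zero_mul_eq_smul, coeff_smul, RingHom.id_apply]
    exact mul_left_comm _ _ _
  map_one_eq_zero' := by ext n; by_cases hn : n = 0 <;> simp [coeff_one, hn]
  leibniz' f g := by
    ext n
    have hsupp (h : R⸨X⸩) : (⟨fun n => n * h.coeff n,
        h.isPWO_support.mono (support_mul_subset_right _ _)⟩ : R⸨X⸩).support ⊆ h.support :=
      support_mul_subset_right _ _
    simp only [LinearMap.coe_mk, AddHom.coe_mk, smul_eq_mul, coeff_add]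
    rw [mul_comm g, coeff_mul, coeff_mul_right' g.isPWO_support (hsupp g),
      coeff_mul_left' f.isPWO_support (hsupp f), Finset.mul_sum, ← Finset.sum_add_distrib]
    refine Finset.sum_congr rfl fun ij hij => ?_
    rw [← (Finset.mem_antidiagonal.1 hij).2.2]
    push_cast
    ring

@[simp]
theorem eulerDerivation_coeff (f : R⸨X⸩) (n : ℤ) :
    (eulerDerivation R f).coeff n = n * f.coeff n :=
  rfl

theorem eulerDerivation_single (n : ℤ) (c : R) :
    eulerDerivation R (single n c) = single n (n * c) := by
  ext m
  by_cases h : m = n <;> simp [h]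

theorem coeff_zero_mul_eulerDerivation (f g : R⸨X⸩) :
    (f * eulerDerivation R g).coeff 0 = -(g * eulerDerivation R f).coeff 0 := by
  have h := congrArg (coeff · 0) ((eulerDerivation R).leibniz f g)
  simp only [eulerDerivation_coeff, Int.cast_zero, zero_mul, smul_eq_mul, coeff_add] at h
  linear_combination -h

end EulerDerivation

section Field

variable {K : Type*} [Field K]

noncomputable def leadingCoeffHom : K⸨X⸩ →*₀ K where
  toFun := leadingCoeff
  map_zero' := leadingCoeff_zero
  map_one' := leadingCoeff_one
  map_mul' x y := leadingCoeff_mul x y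

theorem leadingCoeff_zpow (f : K⸨X⸩) (n : ℤ) : (f ^ n).leadingCoeff = f.leadingCoeff ^ n := by
  exact map_zpow₀ leadingCoeffHom f n

theorem order_zpow {f : K⸨X⸩} (hf : f ≠ 0) (n : ℤ) : (f ^ n).order = n * f.order := by
  have order_mul {g h : K⸨X⸩} (hg : g ≠ 0) (hh : h ≠ 0) :
      (g * h).order = g.order + h.order :=
    order_mul_of_ne_zero (mul_ne_zero (leadingCoeff_ne_zero.2 hg) (leadingCoeff_ne_zero.2 hh))
  have order_inv : f⁻¹.order = -f.order := by
    have h := order_mul hf (inv_ne_zero hf)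
    rw [mul_inv_cancel₀ hf, order_one] at h
    linarith
  induction n using Int.induction_on with
  | zero => simp
  | succ n ih => rw [zpow_add_one₀ hf, order_mul (zpow_ne_zero _ hf) hf, ih]; ring
  | pred n ih =>
    rw [zpow_sub_one₀ hf, order_mul (zpow_ne_zero _ hf) (inv_ne_zero hf), ih, order_inv]; ring

theorem coeff_zero_inv_mul_eulerDerivation (f : K⸨X⸩) :
    (f⁻¹ * eulerDerivation K f).coeff 0 = f.order := by
  rcases eq_or_ne f 0 with rfl | hf
  · simp
  have hinv : f⁻¹.order = -f.order := by simpa using order_zpow hf (-1)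
  have hlead : f⁻¹.leadingCoeff = f.leadingCoeff⁻¹ := by simpa using leadingCoeff_zpow f (-1)
  have h := coeff_mul_add_of_forall_lt (x := f⁻¹) (y := eulerDerivation K f)
    (fun i hi => coeff_eq_zero_of_lt_order (hinv ▸ hi))
    (fun j hj => by rw [eulerDerivation_coeff, coeff_eq_zero_of_lt_order hj, mul_zero])
  rw [neg_add_cancel, eulerDerivation_coeff, ← hinv, ← leadingCoeff_eq, ← leadingCoeff_eq,
    hlead] at h
  rw [h, mul_left_comm, inv_mul_cancel₀ (leadingCoeff_ne_zero.2 hf), mul_one]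

theorem coeff_zero_mul_eulerDerivation_pow {k : K⸨X⸩} (hk : k.order = -1) (m : ℕ)
    {F : K⸨X⸩} (hF : ∀ n < (m : ℤ), F.coeff n = 0) :
    (F * eulerDerivation K (k ^ m)).coeff 0 = -m * k.leadingCoeff ^ m * F.coeff m := by
  have hk0 : k ≠ 0 := by rintro rfl; simp at hk
  have horder : (k ^ m).order = -m := by
    rw [← zpow_natCast, order_zpow hk0, hk]; ring
  have h := coeff_mul_add_of_forall_lt hF (b := -(m : ℤ))
    (fun j hj => by rw [eulerDerivation_coeff, coeff_eq_zero_of_lt_order (horder ▸ hj), mul_zero])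
  have hlead : (k ^ m).leadingCoeff = k.leadingCoeff ^ m := by
    rw [← zpow_natCast, leadingCoeff_zpow, zpow_natCast]
  rw [add_neg_cancel, eulerDerivation_coeff, ← horder, ← leadingCoeff_eq, hlead, horder] at h
  rw [h]
  push_cast
  ring

noncomputable def lagrangeRemainder (k : K⸨X⸩) (N : ℕ) : K⸨X⸩ :=
  single (-1) 1 - k + ∑ α ∈ Finset.Icc 1 (N - 1), C ((k ^ α).coeff 1 / α) * k ^ (-(α : ℤ))

theorem coeff_lagrangeRemainder_of_nonpos {k : K⸨X⸩} (hk : k.order = -1)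
    (hk1 : k.leadingCoeff = 1) (hk0 : k.coeff 0 = 0) (N : ℕ) {n : ℤ} (hn : n ≤ 0) :
    (lagrangeRemainder k N).coeff n = 0 := by
  have hk_ne : k ≠ 0 := by rintro rfl; simp at hk
  have hterm : ∀ α ∈ Finset.Icc 1 (N - 1),
      (C ((k ^ α).coeff 1 / α) * k ^ (-(α : ℤ))).coeff n = 0 := by
    intro α hα
    have hα1 := (Finset.mem_Icc.1 hα).1
    have hlt : n < (k ^ (-(α : ℤ))).order := by rw [order_zpow hk_ne, hk]; omega
    rw [C_mul_eq_smul, coeff_smul, coeff_eq_zero_of_lt_order hlt, smul_zero]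
  rw [lagrangeRemainder, coeff_add, coeff_sub, coeff_sum, Finset.sum_eq_zero hterm, add_zero,
    coeff_single]
  obtain hlt | rfl | rfl : n < -1 ∨ n = -1 ∨ n = 0 := by omega
  · rw [if_neg hlt.ne, coeff_eq_zero_of_lt_order (hk ▸ hlt), sub_zero]
  · rw [if_pos rfl, ← hk, ← leadingCoeff_eq, hk1, sub_self]
  · rw [if_neg (by norm_num), hk0, sub_zero]

variable [CharZero K]

theorem coeff_zero_zpow_sub_one_mul_eulerDerivation (f : K⸨X⸩) {e : ℤ} (he : e ≠ 0) :
    (f ^ (e - 1) * eulerDerivation K f).coeff 0 = 0 := by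
  have h := congrArg (coeff · 0) ((eulerDerivation K).leibniz_zpow f e)
  simp only [eulerDerivation_coeff, Int.cast_zero, zero_mul, smul_eq_mul, coeff_smul] at h
  exact (smul_eq_zero.1 h.symm).resolve_left he

theorem coeff_zero_zpow_mul_eulerDerivation_zpow (f : K⸨X⸩) (a j : ℤ) :
    (f ^ a * eulerDerivation K (f ^ j)).coeff 0 = if a + j = 0 then j * f.order else 0 := by
  rcases eq_or_ne f 0 with rfl | hf
  · simp [Derivation.leibniz_zpow]
  rw [Derivation.leibniz_zpow, smul_eq_mul, mul_smul_comm, coeff_smul, ← mul_assoc,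
    ← zpow_add₀ hf]
  split_ifs with h
  · rw [show a + (j - 1) = -1 by omega, zpow_neg_one, coeff_zero_inv_mul_eulerDerivation,
      zsmul_eq_mul, Int.cast_mul]
  · rw [show a + (j - 1) = a + j - 1 by ring, coeff_zero_zpow_sub_one_mul_eulerDerivation f h,
      smul_zero, Int.cast_zero]

theorem coeff_eq_zero_of_coeff_zero_mul_eulerDerivation_pow {k : K⸨X⸩} (hk : k.order = -1)
    {F : K⸨X⸩} {N : ℕ} (hF : ∀ n ≤ 0, F.coeff n = 0)
    (hres : ∀ j : ℕ, 1 ≤ j → j < N → (F * eulerDerivation K (k ^ j)).coeff 0 = 0)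
    {n : ℤ} (hn : n < N) : F.coeff n = 0 := by
  have hlead : k.leadingCoeff ≠ 0 := leadingCoeff_ne_zero.2 (by rintro rfl; simp at hk)
  suffices ∀ m ≤ N, ∀ n < (m : ℤ), F.coeff n = 0 from this N le_rfl n hn
  intro m
  induction m with
  | zero => exact fun _ n hn => hF n hn.le
  | succ m ih =>
    intro hm n hn
    obtain hlt | rfl : n < m ∨ n = m := by omega
    · exact ih (by omega) n hlt
    obtain rfl | hpos := Nat.eq_zero_or_pos m
    · exact hF _ le_rfl
    have h := coeff_zero_mul_eulerDerivation_pow hk m (ih (by omega))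
    rw [hres m hpos (by omega)] at h
    simpa [hpos.ne', hlead] using h.symm

theorem coeff_zero_lagrangeRemainder_mul_eulerDerivation_pow {k : K⸨X⸩} (hk : k.order = -1)
    {N j : ℕ} (hj1 : 1 ≤ j) (hjN : j < N) :
    (lagrangeRemainder k N * eulerDerivation K (k ^ j)).coeff 0 = 0 := by
  have hx : (single (-1) 1 * eulerDerivation K (k ^ j)).coeff 0 = (k ^ j).coeff 1 := by
    rw [coeff_zero_mul_eulerDerivation, eulerDerivation_single, coeff_mul_single]
    norm_num
  have hpow (a : ℤ) :
      (k ^ a * eulerDerivation K (k ^ j)).coeff 0 = if a = -j then -(j : K) else 0 := by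
    rw [← zpow_natCast, coeff_zero_zpow_mul_eulerDerivation_zpow, hk]
    simp [add_eq_zero_iff_eq_neg]
  have hk' : (k * eulerDerivation K (k ^ j)).coeff 0 = 0 := by
    simpa [if_neg (show (1 : ℤ) ≠ -j by omega)] using hpow 1
  simp only [lagrangeRemainder, add_mul, sub_mul, Finset.sum_mul, mul_assoc, coeff_add, coeff_sub,
    coeff_sum, hx, hk']
  simp only [C_mul_eq_smul, coeff_smul, smul_eq_mul, hpow, neg_inj, Nat.cast_inj]
  rw [Finset.sum_eq_single j]
  · have hj0 : (j : K) ≠ 0 := by exact_mod_cast (by omega : j ≠ 0)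
    rw [if_pos rfl, sub_zero, div_mul_eq_mul_div, mul_neg, neg_div, mul_div_cancel_right₀ _ hj0,
      add_neg_cancel]
  · intro α _ hne
    rw [if_neg hne, mul_zero]
  · intro hj
    exact absurd (Finset.mem_Icc.2 ⟨hj1, by omega⟩) hj

theorem coeff_lagrangeRemainder_eq_zero {k : K⸨X⸩} (hk : k.order = -1)
    (hk1 : k.leadingCoeff = 1) (hk0 : k.coeff 0 = 0) (N : ℕ) {n : ℤ} (hn : n < N) :
    (lagrangeRemainder k N).coeff n = 0 :=
  coeff_eq_zero_of_coeff_zero_mul_eulerDerivation_pow hk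
    (fun _ => coeff_lagrangeRemainder_of_nonpos hk hk1 hk0 N)
    (fun _ hj1 hjN => coeff_zero_lagrangeRemainder_mul_eulerDerivation_pow hk hj1 hjN) hn

end Field

end LaurentSeries

/-- In the Laurent series field `K((y))` with `x = y⁻¹`, let `k = y⁻¹·u` be the
`r`-th root of the miniversal deformation `W_s` of the `A_{r-1}`-singularity, and let
`v α` be the coefficient of `y¹` in `k^α`.  Then the Laurent series
`x − k + ∑_{α=1}^{r-1} (v α / α)·k^{−α}` lies in `y^r·K[[y]]`, i.e. all its coefficients in
degrees `< r` vanish. -/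
theorem expansion_of_x_in_k
    (K : Type*) [Field K] [CharZero K] (r : ℕ) (hr : 2 ≤ r)
    (s : ℕ → K) (u : PowerSeries K)
    (hu1 : PowerSeries.constantCoeff u = 1)
    (hur : u ^ r = 1 + ∑ i ∈ Finset.range (r - 1),
        PowerSeries.C (s i) * PowerSeries.X ^ (r - i))
    (k : LaurentSeries K)
    (hk : k = HahnSeries.single (-1 : ℤ) (1 : K) * HahnSeries.ofPowerSeries ℤ K u)
    (v : ℕ → K) (hv : ∀ α : ℕ, v α = (k ^ α).coeff 1) :
    ∀ n : ℤ, n < (r : ℤ) →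
      (HahnSeries.single (-1 : ℤ) (1 : K) - k
        + ∑ α ∈ Finset.Icc 1 (r - 1),
            HahnSeries.C (v α / (α : K)) * k ^ (-(α : ℤ))).coeff n = 0 := by
  have hu_coeff_one : PowerSeries.coeff 1 u = 0 := by
    have h := congrArg (PowerSeries.coeff 1) hur
    rw [PowerSeries.coeff_one_pow, hu1, one_pow, mul_one, map_add, map_sum, PowerSeries.coeff_one,
      if_neg one_ne_zero, zero_add, Finset.sum_eq_zero fun i hi => ?_] at h
    · exact (mul_eq_zero.1 h).resolve_left (by exact_mod_cast (by omega : r ≠ 0))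
    · rw [PowerSeries.coeff_C_mul_X_pow, if_neg (by have := Finset.mem_range.1 hi; omega)]
  have hk_coeff (n : ℤ) :
      k.coeff n = if n + 1 < 0 then 0 else PowerSeries.coeff (n + 1).natAbs u := by
    rw [hk, HahnSeries.coeff_single_mul, one_mul, sub_neg_eq_add, PowerSeries.coeff_coe]
  have hk_order : k.order = -1 :=
    HahnSeries.order_eq_of_coeff_ne_zero (by simp [hk_coeff, hu1])
      fun m hm => by simp [hk_coeff, show m + 1 < 0 by omega]
  have hk_lead : k.leadingCoeff = 1 := by
    simp [HahnSeries.leadingCoeff_eq, hk_order, hk_coeff, hu1]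
  have hk_zero : k.coeff 0 = 0 := by simp [hk_coeff, hu_coeff_one]
  intro n hn
  simp only [hv]
  exact LaurentSeries.coeff_lagrangeRemainder_eq_zero hk_order hk_lead hk_zero r hn
end

section
/- Assume that (F, G) satisfy the WDVV-type equations over ℂ, and let θ ∈ ℂ satisfy θ^r = −1. Define Q ∈ ℂ[t_0,…,t_{r−2}, x] to be the polynomial obtained from ∂G/∂t_{r−1} by substituting t_{r−1} = −rθx. Then for all 0 ≤ α, γ ≤ r−2, the polynomial Σ_{μ=0}^{r−2} (∂³F/∂t_α∂t_γ∂t_μ)·(∂Q/∂t_{r−2−μ}) − (∂Q/∂t_α)·(∂Q/∂t_γ) lies in the ideal of ℂ[t_0,…,t_{r−2}, x] generated by ∂Q/∂x. (This expresses that the Frobenius multiplication defined by F agrees, modulo the Jacobian ideal, with multiplication of values of Q.) -/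
/-!
Write `c = -rθ`, which is nonzero because `θ ^ r = -1`, and let `φ` be the substitution
`t_{r-1} ↦ c t_{r-1}`, so that `Q = φ (∂G/∂t_{r-1})`. By the chain rule `φ` commutes with
`∂/∂t_i` for `i ≠ r - 1`, while `∂/∂t_{r-1} ∘ φ = c • φ ∘ ∂/∂t_{r-1}`; and `φ` fixes `F`, which
does not involve `t_{r-1}`. Applying `φ` to the WDVV-type equation therefore expresses the
polynomial in question as `-φ(∂²G/∂t_α∂t_γ) · φ(∂²G/∂t_{r-1}²) = -c⁻¹ φ(∂²G/∂t_α∂t_γ) · ∂Q/∂x`.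
-/

namespace MvPolynomial

variable {σ R : Type*} [CommSemiring R]

theorem notMem_vars_of_pderiv_eq_zero [CharZero R] [NoZeroDivisors R] {j : σ}
    {P : MvPolynomial σ R} (h : pderiv j P = 0) : j ∉ P.vars := by
  intro hj
  obtain ⟨d, hd, hjd⟩ := (mem_vars_iff_mem_support j).1 hj
  have hle : Finsupp.single j 1 ≤ d :=
    Finsupp.single_le_iff.2 (Nat.one_le_iff_ne_zero.2 (Finsupp.mem_support_iff.1 hjd))
  have hcoeff := coeff_pderiv (i := j) P (d - Finsupp.single j 1)
  rw [h, coeff_zero, tsub_add_cancel_of_le hle, eq_comm] at hcoeff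
  exact mem_support_iff.1 hd ((mul_eq_zero.1 hcoeff).resolve_right (Nat.cast_add_one_ne_zero _))

variable [DecidableEq σ]

noncomputable def scaleVar (j : σ) (c : R) : MvPolynomial σ R →ₐ[R] MvPolynomial σ R :=
  aeval (Function.update X j (C c * X j))

theorem pderiv_scaleVar (i j : σ) (c : R) (P : MvPolynomial σ R) :
    pderiv i (scaleVar j c P) = (if i = j then C c else 1) * scaleVar j c (pderiv i P) := by
  induction P using MvPolynomial.induction_on with
  | C a => simp
  | add p q hp hq => simp only [map_add, hp, hq, mul_add]
  | mul_X p k hp =>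
    have hX : pderiv i (scaleVar j c (X k)) =
        (if i = j then C c else 1) * scaleVar j c (pderiv i (X k)) := by
      rcases eq_or_ne k j with rfl | hk <;> rcases eq_or_ne i k with rfl | hik <;>
        simp [scaleVar, pderiv_X, *]
    rw [map_mul, pderiv_mul, hp, hX, pderiv_mul, map_add, map_mul, map_mul]
    ring

theorem pderiv_scaleVar_of_ne {i j : σ} (h : i ≠ j) (c : R) (P : MvPolynomial σ R) :
    pderiv i (scaleVar j c P) = scaleVar j c (pderiv i P) := by
  rw [pderiv_scaleVar, if_neg h, one_mul]

theorem pderiv_scaleVar_self (j : σ) (c : R) (P : MvPolynomial σ R) :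
    pderiv j (scaleVar j c P) = C c * scaleVar j c (pderiv j P) := by
  rw [pderiv_scaleVar, if_pos rfl]

theorem scaleVar_eq_self_of_notMem_vars {j : σ} {P : MvPolynomial σ R} (h : j ∉ P.vars)
    (c : R) : scaleVar j c P = P := by
  conv_rhs => rw [← aeval_X_left_apply P]
  refine eval₂Hom_congr' rfl (fun i hi _ => ?_) rfl
  rw [Function.update_of_ne (ne_of_mem_of_not_mem hi h)]

theorem scaleVar_sum_antidiagonal_mul_pderiv {r : ℕ} {j : Fin r} (hj : r - 2 < j) (c : R)
    {A : Fin r → MvPolynomial (Fin r) R}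
    (hA : ∀ μ : Fin r, (μ : ℕ) ≤ r - 2 → scaleVar j c (A μ) = A μ)
    (H : MvPolynomial (Fin r) R) :
    scaleVar j c (∑ μ : Fin r, ∑ ν : Fin r,
        if (μ : ℕ) + (ν : ℕ) = r - 2 then A μ * pderiv ν H else 0) =
      ∑ μ : Fin r, ∑ ν : Fin r,
        if (μ : ℕ) + (ν : ℕ) = r - 2 then A μ * pderiv ν (scaleVar j c H) else 0 := by
  simp only [map_sum]
  refine Finset.sum_congr rfl fun μ _ => Finset.sum_congr rfl fun ν _ => ?_
  split_ifs with h
  · rw [map_mul, hA μ (by omega), pderiv_scaleVar_of_ne (fun hν => by omega)]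
  · exact map_zero _

end MvPolynomial

open MvPolynomial

/-- suppose `(F, G)` satisfy the WDVV-type equations over `ℂ`, `θ^r = −1`, and
`Q` is obtained from `∂G/∂t_{r−1}` by the substitution `t_{r−1} = −rθx` (the last variable of
the ring `ℂ[t_0,…,t_{r−2},x]` plays the role of `x`).  Then for all `0 ≤ α, γ ≤ r−2` the
polynomial `∑_{μ+ν=r−2} (∂³F/∂t_α∂t_γ∂t_μ)·(∂Q/∂t_ν) − (∂Q/∂t_α)·(∂Q/∂t_γ)` lies in the ideal
generated by `∂Q/∂x`. -/
theorem multiplication_from_wdvv_type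
    (r : ℕ) (hr : 2 ≤ r) (θ : ℂ) (hθ : θ ^ r = -1)
    (F G : MvPolynomial (Fin r) ℂ)
    (hF : pderiv (⟨r - 1, by omega⟩ : Fin r) F = 0)
    (hWDVV : ∀ α γ : Fin r, (α : ℕ) ≤ r - 2 → (γ : ℕ) ≤ r - 2 →
      pderiv α (pderiv (⟨r - 1, by omega⟩ : Fin r) G) *
        pderiv γ (pderiv (⟨r - 1, by omega⟩ : Fin r) G)
      = (∑ μ : Fin r, ∑ ν : Fin r,
          if (μ : ℕ) + (ν : ℕ) = r - 2 then
            pderiv α (pderiv γ (pderiv μ F)) *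
              pderiv ν (pderiv (⟨r - 1, by omega⟩ : Fin r) G)
          else 0)
        + pderiv α (pderiv γ G) *
            pderiv (⟨r - 1, by omega⟩ : Fin r) (pderiv (⟨r - 1, by omega⟩ : Fin r) G))
    (Q : MvPolynomial (Fin r) ℂ)
    (hQ : Q = MvPolynomial.aeval
      (fun i : Fin r =>
        if (i : ℕ) = r - 1 then MvPolynomial.C (-(r : ℂ) * θ) * MvPolynomial.X i
        else MvPolynomial.X i)
      (pderiv (⟨r - 1, by omega⟩ : Fin r) G)) :
    ∀ α γ : Fin r, (α : ℕ) ≤ r - 2 → (γ : ℕ) ≤ r - 2 →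
      (∑ μ : Fin r, ∑ ν : Fin r,
        if (μ : ℕ) + (ν : ℕ) = r - 2 then
          pderiv α (pderiv γ (pderiv μ F)) * pderiv ν Q
        else 0)
      - pderiv α Q * pderiv γ Q
      ∈ Ideal.span {pderiv (⟨r - 1, by omega⟩ : Fin r) Q} := by
  intro α γ hα hγ
  set j : Fin r := ⟨r - 1, by omega⟩
  set c : ℂ := -(r : ℂ) * θ
  have hj : r - 2 < (j : ℕ) := by simp only [j]; omega
  have hne : ∀ i : Fin r, (i : ℕ) ≤ r - 2 → i ≠ j := fun i hi h => by rw [h] at hi; omega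
  have hc : c ≠ 0 := by
    have hθ0 : θ ≠ 0 := ne_zero_pow (n := r) (by omega) (by simp [hθ])
    simp only [c, ne_eq, mul_eq_zero, neg_eq_zero, Nat.cast_eq_zero, hθ0, or_false]
    omega
  have hQ' : Q = scaleVar j c (pderiv j G) := by
    rw [hQ, scaleVar]
    congr
    funext i
    rw [Function.update_apply]
    split_ifs <;> simp_all [Fin.ext_iff, j]
  have hF_fixed : ∀ μ : Fin r, (μ : ℕ) ≤ r - 2 →
      scaleVar j c (pderiv α (pderiv γ (pderiv μ F))) = pderiv α (pderiv γ (pderiv μ F)) :=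
    fun μ hμ => by
      rw [← pderiv_scaleVar_of_ne (hne α hα), ← pderiv_scaleVar_of_ne (hne γ hγ),
        ← pderiv_scaleVar_of_ne (hne μ hμ),
        scaleVar_eq_self_of_notMem_vars (notMem_vars_of_pderiv_eq_zero hF)]
  have hWφ := congrArg (scaleVar j c) (eq_sub_of_add_eq (hWDVV α γ hα hγ).symm)
  rw [scaleVar_sum_antidiagonal_mul_pderiv hj c hF_fixed, map_sub, map_mul, map_mul,
    ← pderiv_scaleVar_of_ne (hne α hα), ← pderiv_scaleVar_of_ne (hne γ hγ), ← hQ'] at hWφ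
  have hCc : C c⁻¹ * C c = (1 : MvPolynomial (Fin r) ℂ) := by
    rw [← C_mul, inv_mul_cancel₀ hc, C_1]
  rw [hWφ, Ideal.mem_span_singleton', hQ', pderiv_scaleVar_self]
  refine ⟨-(C c⁻¹ * scaleVar j c (pderiv α (pderiv γ G))), ?_⟩
  linear_combination
    -(scaleVar j c (pderiv α (pderiv γ G)) * scaleVar j c (pderiv j (pderiv j G))) * hCc
end

section
/- Suppose F ∈ ℚ[t_{00}, t_{10}, t_{01}, t_{11}] satisfies: (i) every monomial t_{00}^a t_{10}^b t_{01}^c t_{11}^d occurring in F satisfies 3a + 2b + 2c + d = 7, b + d ≡ 1 (mod 3), and c + d ≡ 1 (mod 3); (ii) F satisfies the WDVV equations; (iii) the coefficients in F of t_{00}²t_{11}, t_{00}t_{10}t_{01}, t_{10}³t_{11} and t_{01}³t_{11} are 1/2, 1, 1/18 and 1/18, respectively. Then F = F_{3,3}. -/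
open scoped BigOperators
open MvPolynomial

/-- The index set `V = {(0,0),(1,0),(0,1),(1,1)}` of the variables `t_{αβ}`. -/
abbrev Vidx : Type := Fin 2 × Fin 2

/-- The metric `η` of the FJRW theory of `x₁³+x₂³`. -/
def eta (v w : Vidx) : ℚ :=
  if v.1.val + w.1.val = 1 ∧ v.2.val + w.2.val = 1 then 1 else 0

/-- Third partial derivative. -/
noncomputable def d3 (F : MvPolynomial Vidx ℚ) (a b c : Vidx) : MvPolynomial Vidx ℚ :=
  pderiv a (pderiv b (pderiv c F))

/-- The WDVV equations with respect to the metric `η`. -/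
def SatisfiesWDVV (F : MvPolynomial Vidx ℚ) : Prop :=
  ∀ v₁ v₂ v₃ v₄ : Vidx,
    ∑ e : Vidx, ∑ f : Vidx, MvPolynomial.C (eta e f) * d3 F v₁ v₂ e * d3 F f v₃ v₄ =
    ∑ e : Vidx, ∑ f : Vidx, MvPolynomial.C (eta e f) * d3 F v₁ v₃ e * d3 F f v₂ v₄

/-- The FJRW potential of the singularity `x₁³+x₂³`. -/
noncomputable def F33 : MvPolynomial Vidx ℚ :=
  MvPolynomial.C (1/2 : ℚ) * X (0,0) ^ 2 * X (1,1)
  + X (0,0) * X (1,0) * X (0,1)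
  + MvPolynomial.C (1/18 : ℚ) * X (1,0) ^ 3 * X (1,1)
  + MvPolynomial.C (1/18 : ℚ) * X (0,1) ^ 3 * X (1,1)
  + MvPolynomial.C (1/54 : ℚ) * X (1,0) * X (0,1) * X (1,1) ^ 3
  + MvPolynomial.C (1/68040 : ℚ) * X (1,1) ^ 7


lemma vcases (v : Vidx) : v = (0,0) ∨ v = (1,0) ∨ v = (0,1) ∨ v = (1,1) := by
  revert v; decide

noncomputable def mk' (p q r s : ℕ) : Vidx →₀ ℕ :=
  Finsupp.single (0,0) p + Finsupp.single (1,0) q + Finsupp.single (0,1) r + Finsupp.single (1,1) s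

@[simp] lemma mk_apply_00 (p q r s : ℕ) : mk' p q r s (0,0) = p := by
  simp [mk', Finsupp.single_apply, Prod.ext_iff]
@[simp] lemma mk_apply_10 (p q r s : ℕ) : mk' p q r s (1,0) = q := by
  simp [mk', Finsupp.single_apply, Prod.ext_iff]
@[simp] lemma mk_apply_01 (p q r s : ℕ) : mk' p q r s (0,1) = r := by
  simp [mk', Finsupp.single_apply, Prod.ext_iff]
@[simp] lemma mk_apply_11 (p q r s : ℕ) : mk' p q r s (1,1) = s := by
  simp [mk', Finsupp.single_apply, Prod.ext_iff]
@[simp] lemma mk_apply_zero (p q r s : ℕ) : mk' p q r s 0 = p := mk_apply_00 p q r s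
@[simp] lemma mk_apply_one (p q r s : ℕ) : mk' p q r s 1 = s := mk_apply_11 p q r s

lemma eq_mk (m : Vidx →₀ ℕ) : m = mk' (m (0,0)) (m (1,0)) (m (0,1)) (m (1,1)) := by
  apply Finsupp.ext; intro v
  rcases vcases v with rfl | rfl | rfl | rfl <;> simp

lemma mk_eq_mk {p q r s p' q' r' s' : ℕ} :
    mk' p q r s = mk' p' q' r' s' ↔ p = p' ∧ q = q' ∧ r = r' ∧ s = s' := by
  constructor
  · intro h
    exact ⟨by simpa using congrArg (fun f : Vidx →₀ ℕ => f (0,0)) h,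
      by simpa using congrArg (fun f : Vidx →₀ ℕ => f (1,0)) h,
      by simpa using congrArg (fun f : Vidx →₀ ℕ => f (0,1)) h,
      by simpa using congrArg (fun f : Vidx →₀ ℕ => f (1,1)) h⟩
  · rintro ⟨rfl, rfl, rfl, rfl⟩; rfl

lemma mk_add_mk (p q r s p' q' r' s' : ℕ) :
    mk' p q r s + mk' p' q' r' s' = mk' (p+p') (q+q') (r+r') (s+s') := by
  apply Finsupp.ext; intro v
  rcases vcases v with rfl | rfl | rfl | rfl <;> simp

lemma mk_sub_00 (p q r s : ℕ) : mk' p q r s - Finsupp.single (0,0) 1 = mk' (p-1) q r s := by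
  apply Finsupp.ext; intro v
  rcases vcases v with rfl | rfl | rfl | rfl <;>
    simp [Finsupp.tsub_apply, Finsupp.single_apply, Prod.ext_iff]
lemma mk_sub_10 (p q r s : ℕ) : mk' p q r s - Finsupp.single (1,0) 1 = mk' p (q-1) r s := by
  apply Finsupp.ext; intro v
  rcases vcases v with rfl | rfl | rfl | rfl <;>
    simp [Finsupp.tsub_apply, Finsupp.single_apply, Prod.ext_iff]
lemma mk_sub_01 (p q r s : ℕ) : mk' p q r s - Finsupp.single (0,1) 1 = mk' p q (r-1) s := by
  apply Finsupp.ext; intro v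
  rcases vcases v with rfl | rfl | rfl | rfl <;>
    simp [Finsupp.tsub_apply, Finsupp.single_apply, Prod.ext_iff]
lemma mk_sub_11 (p q r s : ℕ) : mk' p q r s - Finsupp.single (1,1) 1 = mk' p q r (s-1) := by
  apply Finsupp.ext; intro v
  rcases vcases v with rfl | rfl | rfl | rfl <;>
    simp [Finsupp.tsub_apply, Finsupp.single_apply, Prod.ext_iff]

@[simp] lemma pd00 (p q r s : ℕ) (a : ℚ) :
    pderiv ((0,0) : Vidx) (monomial (mk' p q r s) a) = monomial (mk' (p-1) q r s) (a * p) := by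
  rw [pderiv_monomial]
  rw [show (fun₀ | ((0,0):Vidx) => 1) = Finsupp.single (0,0) 1 from rfl]
  rw [mk_sub_00, mk_apply_00]
@[simp] lemma pd10 (p q r s : ℕ) (a : ℚ) :
    pderiv ((1,0) : Vidx) (monomial (mk' p q r s) a) = monomial (mk' p (q-1) r s) (a * q) := by
  rw [pderiv_monomial, show (fun₀ | ((1,0):Vidx) => 1) = Finsupp.single (1,0) 1 from rfl,
    mk_sub_10, mk_apply_10]
@[simp] lemma pd01 (p q r s : ℕ) (a : ℚ) :
    pderiv ((0,1) : Vidx) (monomial (mk' p q r s) a) = monomial (mk' p q (r-1) s) (a * r) := by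
  rw [pderiv_monomial, show (fun₀ | ((0,1):Vidx) => 1) = Finsupp.single (0,1) 1 from rfl,
    mk_sub_01, mk_apply_01]
@[simp] lemma pd11 (p q r s : ℕ) (a : ℚ) :
    pderiv ((1,1) : Vidx) (monomial (mk' p q r s) a) = monomial (mk' p q r (s-1)) (a * s) := by
  rw [pderiv_monomial, show (fun₀ | ((1,1):Vidx) => 1) = Finsupp.single (1,1) 1 from rfl,
    mk_sub_11, mk_apply_11]

noncomputable def Gm (a b c : ℚ) : MvPolynomial Vidx ℚ :=
  monomial (mk' 2 0 0 1) (1/2) + monomial (mk' 1 1 1 0) 1 + monomial (mk' 0 3 0 1) (1/18)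
  + monomial (mk' 0 0 3 1) (1/18) + monomial (mk' 1 0 0 4) a + monomial (mk' 0 1 1 3) b
  + monomial (mk' 0 0 0 7) c

lemma single_eq_mk_00 (n : ℕ) : Finsupp.single ((0,0):Vidx) n = mk' n 0 0 0 := by
  simp [mk']
lemma single_eq_mk_10 (n : ℕ) : Finsupp.single ((1,0):Vidx) n = mk' 0 n 0 0 := by
  simp [mk']
lemma single_eq_mk_01 (n : ℕ) : Finsupp.single ((0,1):Vidx) n = mk' 0 0 n 0 := by
  simp [mk']
lemma single_eq_mk_11 (n : ℕ) : Finsupp.single ((1,1):Vidx) n = mk' 0 0 0 n := by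
  simp [mk']

lemma mk_smul (n p q r s : ℕ) : n • mk' p q r s = mk' (n*p) (n*q) (n*r) (n*s) := by
  apply Finsupp.ext; intro v
  rcases vcases v with rfl | rfl | rfl | rfl <;> simp [Finsupp.smul_apply]

lemma Gm_eq_F33 : Gm 0 (1/54) (1/68040) = F33 := by
  have hX : ∀ v : Vidx, (X v : MvPolynomial Vidx ℚ) = monomial (Finsupp.single v 1) 1 :=
    fun v => rfl
  rw [F33]
  simp only [hX, monomial_pow, mk_smul, C_mul_monomial, monomial_mul,
    single_eq_mk_00, single_eq_mk_10, single_eq_mk_01, single_eq_mk_11, mk_add_mk]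
  norm_num [Gm]

lemma classify (p q r s : ℕ) (h1 : 3*p + 2*q + 2*r + s = 7)
    (h2 : (q + s) % 3 = 1) (h3 : (r + s) % 3 = 1) :
    (p=2∧q=0∧r=0∧s=1) ∨ (p=1∧q=1∧r=1∧s=0) ∨ (p=0∧q=3∧r=0∧s=1) ∨ (p=0∧q=0∧r=3∧s=1) ∨
    (p=1∧q=0∧r=0∧s=4) ∨ (p=0∧q=1∧r=1∧s=3) ∨ (p=0∧q=0∧r=0∧s=7) := by
  have hp : p ≤ 2 := by omega
  have hq : q ≤ 3 := by omega
  have hr : r ≤ 3 := by omega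
  interval_cases p <;> interval_cases q <;> interval_cases r <;> omega

lemma step1 (F : MvPolynomial Vidx ℚ)
    (hsel : ∀ m ∈ F.support,
      3 * m (0,0) + 2 * m (1,0) + 2 * m (0,1) + m (1,1) = 7 ∧
      (m (1,0) + m (1,1)) % 3 = 1 ∧
      (m (0,1) + m (1,1)) % 3 = 1)
    (h1 : F.coeff (mk' 2 0 0 1) = 1/2)
    (h2 : F.coeff (mk' 1 1 1 0) = 1)
    (h3 : F.coeff (mk' 0 3 0 1) = 1/18)
    (h4 : F.coeff (mk' 0 0 3 1) = 1/18) :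
    F = Gm (F.coeff (mk' 1 0 0 4)) (F.coeff (mk' 0 1 1 3)) (F.coeff (mk' 0 0 0 7)) := by
  ext m
  rw [show (coeff m (Gm (F.coeff (mk' 1 0 0 4)) (F.coeff (mk' 0 1 1 3)) (F.coeff (mk' 0 0 0 7)))) =
    (if mk' 2 0 0 1 = m then (1/2 : ℚ) else 0) + (if mk' 1 1 1 0 = m then 1 else 0)
    + (if mk' 0 3 0 1 = m then 1/18 else 0) + (if mk' 0 0 3 1 = m then 1/18 else 0)
    + (if mk' 1 0 0 4 = m then F.coeff (mk' 1 0 0 4) else 0)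
    + (if mk' 0 1 1 3 = m then F.coeff (mk' 0 1 1 3) else 0)
    + (if mk' 0 0 0 7 = m then F.coeff (mk' 0 0 0 7) else 0) from by
      simp [Gm, coeff_monomial]]
  by_cases hm : m ∈ F.support
  · obtain ⟨e1, e2, e3⟩ := hsel m hm
    have hc := classify _ _ _ _ e1 e2 e3
    have hmk := eq_mk m
    rcases hc with ⟨a,b,c,d⟩|⟨a,b,c,d⟩|⟨a,b,c,d⟩|⟨a,b,c,d⟩|⟨a,b,c,d⟩|⟨a,b,c,d⟩|⟨a,b,c,d⟩ <;>
      rw [a, b, c, d] at hmk <;> rw [hmk] <;>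
      simp [mk_eq_mk, h1, h2, h3, h4]
  · have h0 : F.coeff m = 0 := notMem_support_iff.mp hm
    rw [h0]
    have n1 : ¬ (mk' 2 0 0 1 = m) := fun h => by rw [← h] at h0; rw [h0] at h1; norm_num at h1
    have n2 : ¬ (mk' 1 1 1 0 = m) := fun h => by rw [← h] at h0; rw [h0] at h2; norm_num at h2
    have n3 : ¬ (mk' 0 3 0 1 = m) := fun h => by rw [← h] at h0; rw [h0] at h3; norm_num at h3
    have n4 : ¬ (mk' 0 0 3 1 = m) := fun h => by rw [← h] at h0; rw [h0] at h4; norm_num at h4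
    rw [if_neg n1, if_neg n2, if_neg n3, if_neg n4]
    by_cases k5 : mk' 1 0 0 4 = m
    · rw [if_pos k5, k5, h0, if_neg (by rw [← k5]; simp [mk_eq_mk]),
        if_neg (by rw [← k5]; simp [mk_eq_mk])]
      simp
    · rw [if_neg k5]
      by_cases k6 : mk' 0 1 1 3 = m
      · rw [if_pos k6, k6, h0, if_neg (by rw [← k6]; simp [mk_eq_mk])]
        simp
      · rw [if_neg k6]
        by_cases k7 : mk' 0 0 0 7 = m
        · rw [if_pos k7, k7, h0]; simp
        · rw [if_neg k7]; simp

set_option maxHeartbeats 2000000 in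
/-- a polynomial satisfying the selection rules of the FJRW theory of `x₁³+x₂³`,
the WDVV equations, and having the correct 3- and 4-point correlators, is equal to `F_{3,3}`. -/
theorem F33_unique
    (F : MvPolynomial Vidx ℚ)
    (hsel : ∀ m ∈ F.support,
      3 * m (0,0) + 2 * m (1,0) + 2 * m (0,1) + m (1,1) = 7 ∧
      (m (1,0) + m (1,1)) % 3 = 1 ∧
      (m (0,1) + m (1,1)) % 3 = 1)
    (hWDVV : SatisfiesWDVV F)
    (h1 : F.coeff (Finsupp.single (0,0) 2 + Finsupp.single (1,1) 1) = 1/2)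
    (h2 : F.coeff (Finsupp.single (0,0) 1 + Finsupp.single (1,0) 1 + Finsupp.single (0,1) 1) = 1)
    (h3 : F.coeff (Finsupp.single (1,0) 3 + Finsupp.single (1,1) 1) = 1/18)
    (h4 : F.coeff (Finsupp.single (0,1) 3 + Finsupp.single (1,1) 1) = 1/18) :
    F = F33 := by
  have h1' : F.coeff (mk' 2 0 0 1) = 1/2 := by
    rw [show mk' 2 0 0 1 = Finsupp.single (0,0) 2 + Finsupp.single (1,1) 1 from by simp [mk']]
    exact h1
  have h2' : F.coeff (mk' 1 1 1 0) = 1 := by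
    rw [show mk' 1 1 1 0 =
      Finsupp.single (0,0) 1 + Finsupp.single (1,0) 1 + Finsupp.single (0,1) 1 from by simp [mk']]
    exact h2
  have h3' : F.coeff (mk' 0 3 0 1) = 1/18 := by
    rw [show mk' 0 3 0 1 = Finsupp.single (1,0) 3 + Finsupp.single (1,1) 1 from by simp [mk']]
    exact h3
  have h4' : F.coeff (mk' 0 0 3 1) = 1/18 := by
    rw [show mk' 0 0 3 1 = Finsupp.single (0,1) 3 + Finsupp.single (1,1) 1 from by simp [mk']]
    exact h4
  obtain ⟨a, b, c, hF⟩ : ∃ a b c, F = Gm a b c :=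
    ⟨_, _, _, step1 F hsel h1' h2' h3' h4'⟩
  have ha : a = 0 := by
    have W := hWDVV (0,0) (0,0) (1,1) (1,1)
    rw [hF] at W
    have E := congrArg (coeff (mk' 0 0 0 2)) W
    simp only [Fintype.sum_prod_type, Fin.sum_univ_two, d3, Gm, map_add,
      pd00, pd10, pd01, pd11, eta] at E
    norm_num [mul_add, add_mul, monomial_mul, mk_add_mk, C_mul_monomial, coeff_monomial,
      mk_eq_mk, Prod.ext_iff] at E
    linarith [E]
  have hb : b = 1/54 := by
    have W := hWDVV (1,0) (1,0) (0,1) (0,1)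
    rw [hF] at W
    have E := congrArg (coeff (mk' 0 0 0 2)) W
    simp only [Fintype.sum_prod_type, Fin.sum_univ_two, d3, Gm, map_add,
      pd00, pd10, pd01, pd11, eta] at E
    norm_num [mul_add, add_mul, monomial_mul, mk_add_mk, C_mul_monomial, coeff_monomial,
      mk_eq_mk, Prod.ext_iff] at E
    linarith [E]
  have hc : c = 1/68040 := by
    have W := hWDVV (1,0) (0,1) (1,1) (1,1)
    rw [hF] at W
    have E := congrArg (coeff (mk' 0 0 0 4)) W
    simp only [Fintype.sum_prod_type, Fin.sum_univ_two, d3, Gm, map_add,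
      pd00, pd10, pd01, pd11, eta] at E
    norm_num [mul_add, add_mul, monomial_mul, mk_add_mk, C_mul_monomial, coeff_monomial,
      mk_eq_mk, Prod.ext_iff] at E
    subst ha hb
    linarith [E]
  rw [hF, ha, hb, hc]
  exact Gm_eq_F33
end

section
/- Let a, c, u ∈ ℂ with c³ = a, c ≠ 0 and u⁶ = 3. Then, as polynomials in ℂ[t₁, t_X, t_Y, t_{X²}]: F_{D₄ᵀ}(t₁, t_X, t_Y, t_{X²}) = (1/(36u²c²))·F_{3,3}(t₁, u⁴c·t_X + 3uc·t_Y, u⁴c·t_X − 3uc·t_Y, 6u²c²·t_{X²}). Consequently, after this linear change of variables and rescaling of the potential, the FJRW potential of D₄ᵀ coincides with the FJRW potential of x₁³+x₂³. -/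
open scoped BigOperators
open MvPolynomial

/-- The FJRW potential of the singularity `x₁³+x₂³` over `ℂ`, in the variables
`t₀₀ = X 0`, `t₁₀ = X 1`, `t₀₁ = X 2`, `t₁₁ = X 3`. -/
noncomputable def F33C : MvPolynomial (Fin 4) ℂ :=
  MvPolynomial.C (1/2 : ℂ) * X 0 ^ 2 * X 3
  + X 0 * X 1 * X 2
  + MvPolynomial.C (1/18 : ℂ) * X 1 ^ 3 * X 3
  + MvPolynomial.C (1/18 : ℂ) * X 2 ^ 3 * X 3
  + MvPolynomial.C (1/54 : ℂ) * X 1 * X 2 * X 3 ^ 3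
  + MvPolynomial.C (1/68040 : ℂ) * X 3 ^ 7

/-- The FJRW potential of the singularity `D₄ᵀ = x₁³x₂ + x₂²` with parameter `a`, in the
variables `t₁ = X 0`, `t_X = X 1`, `t_Y = X 2`, `t_{X²} = X 3`. -/
noncomputable def FD4T (a : ℂ) : MvPolynomial (Fin 4) ℂ :=
  MvPolynomial.C (1/12 : ℂ) * X 1 ^ 2 * X 0
  - MvPolynomial.C (1/4 : ℂ) * X 2 ^ 2 * X 0
  + MvPolynomial.C (1/12 : ℂ) * X 3 * X 0 ^ 2
  + MvPolynomial.C (a/6) * X 1 ^ 3 * X 3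
  + MvPolynomial.C (3*a/2) * X 1 * X 2 ^ 2 * X 3
  + MvPolynomial.C (a^2) * X 1 ^ 2 * X 3 ^ 3
  - MvPolynomial.C (3*a^2) * X 2 ^ 2 * X 3 ^ 3
  + MvPolynomial.C (36*a^4/35) * X 3 ^ 7

/-- for `c³ = a`, `c ≠ 0`, `u⁶ = 3`, the FJRW potential of `D₄ᵀ` equals
`1/(36u²c²)` times `F_{3,3}` after the linear change of variables
`t₀₀ = t₁`, `t₁₀ = u⁴c·t_X + 3uc·t_Y`, `t₀₁ = u⁴c·t_X − 3uc·t_Y`, `t₁₁ = 6u²c²·t_{X²}`. -/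
theorem FD4T_eq_F33_after_change_of_variables
    (a c u : ℂ) (hc : c ^ 3 = a) (hc0 : c ≠ 0) (hu : u ^ 6 = 3) :
    FD4T a =
      MvPolynomial.C (1/(36*u^2*c^2)) *
        (MvPolynomial.aeval
          ![X 0,
            MvPolynomial.C (u^4*c) * X 1 + MvPolynomial.C (3*u*c) * X 2,
            MvPolynomial.C (u^4*c) * X 1 - MvPolynomial.C (3*u*c) * X 2,
            MvPolynomial.C (6*u^2*c^2) * X 3] F33C) := by
  subst hc
  have hd : (36*u^2*c^2 : ℂ) ≠ 0 := by
    have hu0 : u ≠ 0 := by intro h; rw [h] at hu; norm_num at hu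
    simp [hu0, hc0]
  apply MvPolynomial.funext
  intro x
  simp only [map_add, map_sub, map_mul, map_pow, eval_C, eval_X, FD4T, F33C,
    MvPolynomial.aeval_X, MvPolynomial.algHom_C, MvPolynomial.aeval_C,
    Matrix.cons_val_zero, Matrix.cons_val_one, Matrix.head_cons,
    Matrix.cons_val_two, Matrix.tail_cons, Matrix.cons_val_three,
    MvPolynomial.eval_mul, MvPolynomial.eval_add, algebraMap_eq]
  conv_rhs => rw [one_div_mul_eq_div]
  rw [eq_div_iff hd]
  linear_combination (-(u^2*c^2*(x 0)*(x 1)^2) - 18*u^2*c^5*(x 1)*(x 2)^2*(x 3)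
    - 2*u^2*c^5*(x 1)^3*(x 3) + 36*u^2*c^8*(x 2)^2*(x 3)^3 - 12*u^2*c^8*(x 1)^2*(x 3)^3
    - (432/35)*u^2*c^14*(x 3)^7 - (2/3)*u^8*c^5*(x 1)^3*(x 3) - 4*u^8*c^8*(x 1)^2*(x 3)^3
    - (144/35)*u^8*c^14*(x 3)^7) * hu
end

section
/- Let r ≥ 3 and suppose F₁, F₂ ∈ ℚ[t_0,…,t_{r−2}] both satisfy: (i) quasi-homogeneity: every monomial Π_α t_α^{n_α} occurring satisfies Σ_{α=0}^{r−2} (r−α)·n_α = 2r+2; (ii) the WDVV equations; (iii) ∂³F/∂t_α∂t_β∂t_γ evaluated at t = 0 equals δ_{α+β+γ, r−2} for all 0 ≤ α, β, γ ≤ r−2; (iv) ∂⁴F/∂t_{r−2}∂t_{r−2}∂t_1∂t_1 evaluated at t = 0 equals 1/r. Then F₁ = F₂; i.e., a polynomial satisfying the homogeneity condition, the WDVV equations and the initial conditions of the genus-0 r-spin theory is unique. -/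
/-!
Let `G = F₁ - F₂` and, for a multiset `S` of indices, let `g S = ∂^S G (0)`. Quasi-homogeneity
forces `∑_{α ∈ S} (r - α) = 2r + 2` whenever `g S ≠ 0`, hence `|S| ≥ 3`, and the 3-point
conditions give `g S = 0` for `|S| = 3`. Assume `g` vanishes below degree `n ≥ 4`. Subtracting
the WDVV equations of `F₁` and `F₂` and taking the coefficient of `t^m`, `|m| = n - 3`, every
product of two `G`-factors drops out and the 3-point function `δ_{α+β+μ, r-2}` collapses the
`μ`-sum, leaving the linear relation
`g(m+{α,β,γ+δ}) + g(m+{γ,δ,α+β}) = g(m+{α,γ,β+δ}) + g(m+{β,δ,α+γ})`,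
where terms with an index above `r - 2` are `0`.

If `0 ∈ S`, one instance of this relation gives `g S = 0` outright. Otherwise let `i ≥ j ≥ k` be
the largest entries of `S`. If `k = 1`, the weight forces `S = {r-2, r-2, 1, 1}`, settled by the
4-point condition. If `k ≥ 2`, the relation for `(1, k-1, i, j)` expresses `g S` through multisets
with a larger sum of squared entries, so a descending induction on that sum finishes.
-/

open MvPolynomial

theorem Fin.sum_sum_ite_val_add_eq {M : Type*} [AddCommMonoid M] {n : ℕ}
    (f : Fin n → Fin n → M) :
    ∑ μ : Fin n, ∑ ν : Fin n, (if (μ : ℕ) + ν = n - 1 then f μ ν else 0) = ∑ μ, f μ μ.rev := by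
  refine Finset.sum_congr rfl fun μ _ => ?_
  rw [Finset.sum_eq_single_of_mem μ.rev (Finset.mem_univ _)]
  · rw [if_pos (by rw [Fin.val_rev]; omega)]
  · intro ν _ hν
    exact if_neg fun h => hν (Fin.ext (by rw [Fin.val_rev]; omega))

theorem Fin.sum_ite_val_eq {M : Type*} [AddCommMonoid M] {n : ℕ} (u : Fin n → M) (c : ℕ) :
    ∑ μ : Fin n, (if (μ : ℕ) = c then u μ else 0) = if h : c < n then u ⟨c, h⟩ else 0 := by
  split_ifs with h
  · rw [Finset.sum_eq_single_of_mem ⟨c, h⟩ (Finset.mem_univ _) fun ν _ hν =>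
      if_neg fun h' => hν (Fin.ext h'), if_pos rfl]
  · exact Finset.sum_eq_zero fun μ _ => if_neg (by omega)

theorem Multiset.exists_eq_cons_forall_le {α : Type*} [LinearOrder α] {S : Multiset α}
    (hS : S ≠ 0) : ∃ i T, S = i ::ₘ T ∧ ∀ x ∈ T, x ≤ i := by
  obtain ⟨i, hi, hmax⟩ := S.exists_max_image id hS
  obtain ⟨T, rfl⟩ := exists_cons_of_mem hi
  exact ⟨i, T, rfl, fun x hx => hmax x (mem_cons_of_mem hx)⟩

theorem Multiset.sum_map_eq_sum_mul_count {ι : Type*} [Fintype ι] [DecidableEq ι]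
    (S : Multiset ι) (f : ι → ℕ) : (S.map f).sum = ∑ i, f i * S.count i := by
  induction S using Multiset.induction_on with
  | empty => simp
  | cons a S ih => simp [count_cons, mul_add, Finset.sum_add_distrib, ih, add_comm]

theorem Multiset.sum_map_val_le_card_mul {k : ℕ} {S : Multiset (Fin k)} {j : Fin k}
    (h : ∀ x ∈ S, x ≤ j) : (S.map Fin.val).sum ≤ card S * j := by
  simpa using sum_le_card_nsmul (S.map Fin.val) j fun _ hy => by
    obtain ⟨x, hx, rfl⟩ := mem_map.1 hy
    exact h x hx

theorem MvPolynomial.coeff_mul_eq_coeff_mul_constantCoeff {R σ : Type*} [CommSemiring R]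
    {f : MvPolynomial σ R} {m : σ →₀ ℕ} (hf : ∀ p < m, coeff p f = 0) (P : MvPolynomial σ R) :
    coeff m (f * P) = coeff m f * constantCoeff P := by
  classical
  rw [coeff_mul, Finset.sum_eq_single_of_mem (m, 0) (by simp), constantCoeff_eq]
  rintro ⟨p, q⟩ hpq hne
  rw [Finset.HasAntidiagonal.mem_antidiagonal] at hpq
  have hp : p < m := by
    refine lt_of_le_of_ne (hpq ▸ le_self_add) fun h => hne ?_
    subst h
    simpa using hpq
  rw [hf p hp, zero_mul]

section TaylorCoeff

variable {R σ : Type*} [CommSemiring R] [Fintype σ] [DecidableEq σ]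

/-- `∂^S f (0) = S! · [t^S] f`; with this normalisation differentiation only shifts the index
(`taylorCoeff_pderiv`). -/
noncomputable def taylorCoeff (S : Multiset σ) : MvPolynomial σ R →ₗ[R] R :=
  (∏ i, ((S.count i).factorial : R)) • lcoeff R (Multiset.toFinsupp S)

theorem taylorCoeff_apply (S : Multiset σ) (f : MvPolynomial σ R) :
    taylorCoeff S f = (∏ i, ((S.count i).factorial : R)) * coeff (Multiset.toFinsupp S) f :=
  rfl

theorem taylorCoeff_zero (f : MvPolynomial σ R) : taylorCoeff 0 f = constantCoeff f := by
  simp [taylorCoeff_apply, constantCoeff_eq]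

theorem taylorCoeff_pderiv (S : Multiset σ) (i : σ) (f : MvPolynomial σ R) :
    taylorCoeff S (pderiv i f) = taylorCoeff (i ::ₘ S) f := by
  have hS : Multiset.toFinsupp (i ::ₘ S) = Multiset.toFinsupp S + Finsupp.single i 1 := by
    rw [← Multiset.singleton_add, Multiset.toFinsupp_add, Multiset.toFinsupp_singleton, add_comm]
  have hprod : ∏ j, ((Multiset.count j (i ::ₘ S)).factorial : R)
      = (∏ j, ((S.count j).factorial : R)) * (S.count i + 1) := by
    rw [← Finset.mul_prod_erase _ _ (Finset.mem_univ i),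
      ← Finset.mul_prod_erase _ _ (Finset.mem_univ i), Multiset.count_cons_self,
      Nat.factorial_succ, Finset.prod_congr rfl fun j hj =>
        by rw [Multiset.count_cons_of_ne (Finset.ne_of_mem_erase hj)]]
    push_cast
    ring
  rw [taylorCoeff_apply, taylorCoeff_apply, coeff_pderiv, hS, hprod, Multiset.toFinsupp_apply]
  ring

theorem taylorCoeff_pderiv_pderiv_pderiv (S : Multiset σ) (x y z : σ) (f : MvPolynomial σ R) :
    taylorCoeff S (pderiv x (pderiv y (pderiv z f))) = taylorCoeff (x ::ₘ y ::ₘ z ::ₘ S) f := by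
  rw [taylorCoeff_pderiv, taylorCoeff_pderiv, taylorCoeff_pderiv, Multiset.cons_swap z y,
    Multiset.cons_swap z x, Multiset.cons_swap y x]

theorem taylorCoeff_triple (x y z : σ) (f : MvPolynomial σ R) :
    taylorCoeff {x, y, z} f = constantCoeff (pderiv x (pderiv y (pderiv z f))) := by
  rw [← taylorCoeff_zero, taylorCoeff_pderiv_pderiv_pderiv]
  rfl

variable [NoZeroDivisors R] [CharZero R]

theorem taylorCoeff_eq_zero_iff {S : Multiset σ} {f : MvPolynomial σ R} :
    taylorCoeff S f = 0 ↔ coeff (Multiset.toFinsupp S) f = 0 := by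
  rw [taylorCoeff_apply, mul_eq_zero_iff_left]
  exact Finset.prod_ne_zero_iff.2 fun i _ => Nat.cast_ne_zero.2 (Nat.factorial_ne_zero _)

theorem eq_zero_of_forall_taylorCoeff_eq_zero {f : MvPolynomial σ R}
    (h : ∀ S, taylorCoeff S f = 0) : f = 0 := by
  ext s
  rw [coeff_zero, ← Finsupp.toMultiset_toFinsupp s, ← taylorCoeff_eq_zero_iff]
  exact h _

theorem taylorCoeff_mul_of_forall_card_lt {S : Multiset σ} {f : MvPolynomial σ R}
    (hf : ∀ T : Multiset σ, Multiset.card T < Multiset.card S → taylorCoeff T f = 0)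
    (P : MvPolynomial σ R) :
    taylorCoeff S (f * P) = taylorCoeff S f * constantCoeff P := by
  rw [taylorCoeff_apply, taylorCoeff_apply, coeff_mul_eq_coeff_mul_constantCoeff, mul_assoc]
  intro p hp
  rw [← Finsupp.toMultiset_toFinsupp p, ← taylorCoeff_eq_zero_iff]
  refine hf _ (Multiset.card_lt_card ?_)
  simpa using Finsupp.toMultiset_strictMono hp

end TaylorCoeff

theorem sum_map_eq_of_taylorCoeff_sub_ne_zero {R σ : Type*} [CommRing R] [Fintype σ]
    [DecidableEq σ] {F₁ F₂ : MvPolynomial σ R} {ω : σ → ℕ} {w : ℕ}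
    (h₁ : ∀ m ∈ F₁.support, ∑ i, ω i * m i = w) (h₂ : ∀ m ∈ F₂.support, ∑ i, ω i * m i = w)
    {S : Multiset σ} (hS : taylorCoeff S (F₁ - F₂) ≠ 0) : (S.map ω).sum = w := by
  have hcoeff : Multiset.toFinsupp S ∈ (F₁ - F₂).support :=
    mem_support_iff.2 fun h => hS (by rw [taylorCoeff_apply, h, mul_zero])
  rw [Multiset.sum_map_eq_sum_mul_count]
  rcases Finset.mem_union.1 (support_sub _ F₁ F₂ hcoeff) with h | h
  · simpa using h₁ _ h
  · simpa using h₂ _ h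

section WDVV

variable {r : ℕ}

noncomputable def wdvvSum {R : Type*} [CommRing R] (F : MvPolynomial (Fin (r - 1)) R)
    (α β γ δ : Fin (r - 1)) : MvPolynomial (Fin (r - 1)) R :=
  ∑ μ : Fin (r - 1), ∑ ν : Fin (r - 1),
    if (μ : ℕ) + (ν : ℕ) = r - 2 then
      pderiv α (pderiv β (pderiv μ F)) * pderiv ν (pderiv γ (pderiv δ F))
    else 0

def wdvvTerm {M : Type*} [Zero M] (g : Multiset (Fin (r - 1)) → M) (S : Multiset (Fin (r - 1)))
    (x y : Fin (r - 1)) (c : ℕ) : M :=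
  if h : c < r - 1 then g (x ::ₘ y ::ₘ ⟨c, h⟩ ::ₘ S) else 0

/-- The WDVV equations in degree `n`, linearized at the 3-point function `δ_{α+β+γ, r-2}`. -/
def LinearizedWDVV {M : Type*} [AddCommGroup M] (g : Multiset (Fin (r - 1)) → M) (n : ℕ) :
    Prop :=
  ∀ S : Multiset (Fin (r - 1)), Multiset.card S + 3 = n → ∀ α β γ δ : Fin (r - 1),
    wdvvTerm g S α β (γ + δ) + wdvvTerm g S γ δ (α + β) =
      wdvvTerm g S α γ (β + δ) + wdvvTerm g S β δ (α + γ)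

variable {R : Type*} [CommRing R]

theorem wdvvSum_eq_sum_rev (F : MvPolynomial (Fin (r - 1)) R) (α β γ δ : Fin (r - 1)) :
    wdvvSum F α β γ δ = ∑ μ : Fin (r - 1),
      pderiv α (pderiv β (pderiv μ F)) * pderiv μ.rev (pderiv γ (pderiv δ F)) := by
  rw [wdvvSum, show r - 2 = r - 1 - 1 by omega, Fin.sum_sum_ite_val_add_eq]

theorem wdvvSum_sub_wdvvSum (F₁ F₂ : MvPolynomial (Fin (r - 1)) R) (α β γ δ : Fin (r - 1)) :
    wdvvSum F₁ α β γ δ - wdvvSum F₂ α β γ δ =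
      ∑ μ : Fin (r - 1),
        pderiv α (pderiv β (pderiv μ (F₁ - F₂))) * pderiv μ.rev (pderiv γ (pderiv δ F₁)) +
      ∑ μ : Fin (r - 1),
        pderiv α (pderiv β (pderiv μ.rev F₂)) * pderiv μ (pderiv γ (pderiv δ (F₁ - F₂))) := by
  rw [wdvvSum_eq_sum_rev, wdvvSum_eq_sum_rev, ← Fintype.sum_equiv Fin.revPerm
    (fun μ => pderiv α (pderiv β (pderiv μ F₂)) * pderiv μ.rev (pderiv γ (pderiv δ (F₁ - F₂))))
    (fun μ => pderiv α (pderiv β (pderiv μ.rev F₂)) * pderiv μ (pderiv γ (pderiv δ (F₁ - F₂))))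
    fun μ => by simp, ← Finset.sum_add_distrib, ← Finset.sum_sub_distrib]
  refine Finset.sum_congr rfl fun μ _ => ?_
  simp only [map_sub]
  ring

variable [NoZeroDivisors R] [CharZero R]

theorem taylorCoeff_wdvvSum_sub {F₁ F₂ : MvPolynomial (Fin (r - 1)) R}
    (h₁ : ∀ x y z : Fin (r - 1), constantCoeff (pderiv x (pderiv y (pderiv z F₁))) =
      if (x : ℕ) + (y : ℕ) + (z : ℕ) = r - 2 then 1 else 0)
    (h₂ : ∀ x y z : Fin (r - 1), constantCoeff (pderiv x (pderiv y (pderiv z F₂))) =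
      if (x : ℕ) + (y : ℕ) + (z : ℕ) = r - 2 then 1 else 0)
    {S : Multiset (Fin (r - 1))}
    (hlow : ∀ T, Multiset.card T < Multiset.card S + 3 → taylorCoeff T (F₁ - F₂) = 0)
    (α β γ δ : Fin (r - 1)) :
    taylorCoeff S (wdvvSum F₁ α β γ δ - wdvvSum F₂ α β γ δ) =
      wdvvTerm (fun T => taylorCoeff T (F₁ - F₂)) S α β (γ + δ) +
        wdvvTerm (fun T => taylorCoeff T (F₁ - F₂)) S γ δ (α + β) := by
  set G := F₁ - F₂
  have hlowG : ∀ x y z : Fin (r - 1), ∀ T, Multiset.card T < Multiset.card S →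
      taylorCoeff T (pderiv x (pderiv y (pderiv z G))) = 0 := fun x y z T hT => by
    rw [taylorCoeff_pderiv_pderiv_pderiv]
    exact hlow _ (by simpa using hT)
  have hfirst : ∀ μ : Fin (r - 1),
      taylorCoeff S (pderiv α (pderiv β (pderiv μ G)) * pderiv μ.rev (pderiv γ (pderiv δ F₁))) =
        if (μ : ℕ) = γ + δ then taylorCoeff (α ::ₘ β ::ₘ μ ::ₘ S) G else 0 := fun μ => by
    rw [taylorCoeff_mul_of_forall_card_lt (hlowG α β μ), h₁, taylorCoeff_pderiv_pderiv_pderiv,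
      mul_ite, mul_one, mul_zero]
    exact if_congr (by rw [Fin.val_rev]; omega) rfl rfl
  have hsecond : ∀ μ : Fin (r - 1),
      taylorCoeff S (pderiv α (pderiv β (pderiv μ.rev F₂)) * pderiv μ (pderiv γ (pderiv δ G))) =
        if (μ : ℕ) = α + β then taylorCoeff (μ ::ₘ γ ::ₘ δ ::ₘ S) G else 0 := fun μ => by
    rw [mul_comm, taylorCoeff_mul_of_forall_card_lt (hlowG μ γ δ), h₂,
      taylorCoeff_pderiv_pderiv_pderiv, mul_ite, mul_one, mul_zero]
    exact if_congr (by rw [Fin.val_rev]; omega) rfl rfl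
  rw [wdvvSum_sub_wdvvSum, map_add, map_sum, map_sum, Finset.sum_congr rfl fun μ _ => hfirst μ,
    Finset.sum_congr rfl fun μ _ => hsecond μ, Fin.sum_ite_val_eq, Fin.sum_ite_val_eq]
  congr 1
  rw [wdvvTerm]
  split_ifs
  · rw [Multiset.cons_swap _ γ, Multiset.cons_swap _ δ]
  · rfl

theorem linearizedWDVV_taylorCoeff_sub {F₁ F₂ : MvPolynomial (Fin (r - 1)) R}
    (h₁ : ∀ x y z : Fin (r - 1), constantCoeff (pderiv x (pderiv y (pderiv z F₁))) =
      if (x : ℕ) + (y : ℕ) + (z : ℕ) = r - 2 then 1 else 0)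
    (h₂ : ∀ x y z : Fin (r - 1), constantCoeff (pderiv x (pderiv y (pderiv z F₂))) =
      if (x : ℕ) + (y : ℕ) + (z : ℕ) = r - 2 then 1 else 0)
    (hW₁ : ∀ α β γ δ, wdvvSum F₁ α β γ δ = wdvvSum F₁ α γ β δ)
    (hW₂ : ∀ α β γ δ, wdvvSum F₂ α β γ δ = wdvvSum F₂ α γ β δ) {n : ℕ}
    (hlow : ∀ T, Multiset.card T < n → taylorCoeff T (F₁ - F₂) = 0) :
    LinearizedWDVV (fun S => taylorCoeff S (F₁ - F₂)) n := by
  intro S hS α β γ δ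
  rw [← hS] at hlow
  rw [← taylorCoeff_wdvvSum_sub h₁ h₂ hlow, ← taylorCoeff_wdvvSum_sub h₁ h₂ hlow, hW₁, hW₂]

end WDVV

section Combinatorics

variable {r : ℕ} {M : Type*} [AddCommGroup M]

theorem wdvvTerm_val (g : Multiset (Fin (r - 1)) → M) (S : Multiset (Fin (r - 1)))
    (x y z : Fin (r - 1)) : wdvvTerm g S x y z = g (x ::ₘ y ::ₘ z ::ₘ S) :=
  dif_pos z.isLt

theorem wdvvTerm_of_le (g : Multiset (Fin (r - 1)) → M) (S : Multiset (Fin (r - 1)))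
    (x y : Fin (r - 1)) {c : ℕ} (hc : r - 1 ≤ c) : wdvvTerm g S x y c = 0 :=
  dif_neg hc.not_gt

theorem wdvvTerm_eq_zero {g : Multiset (Fin (r - 1)) → M} {S : Multiset (Fin (r - 1))}
    {x y : Fin (r - 1)} {c : ℕ} (h : ∀ hc : c < r - 1, g (x ::ₘ y ::ₘ ⟨c, hc⟩ ::ₘ S) = 0) :
    wdvvTerm g S x y c = 0 := by
  unfold wdvvTerm
  split_ifs with hc
  exacts [h hc, rfl]

def sqSum {k : ℕ} (S : Multiset (Fin k)) : ℕ := (S.map fun x : Fin k => (x : ℕ) ^ 2).sum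

@[simp]
theorem sqSum_cons {k : ℕ} (x : Fin k) (S : Multiset (Fin k)) :
    sqSum (x ::ₘ S) = (x : ℕ) ^ 2 + sqSum S := by
  simp [sqSum]

theorem sqSum_le {k : ℕ} (S : Multiset (Fin k)) : sqSum S ≤ Multiset.card S * (k - 1) ^ 2 := by
  simpa [sqSum] using Multiset.sum_le_card_nsmul (S.map fun x : Fin k => (x : ℕ) ^ 2) _
    fun _ hy => by
      obtain ⟨x, -, rfl⟩ := Multiset.mem_map.1 hy
      exact Nat.pow_le_pow_left (Nat.le_sub_one_of_lt x.isLt) 2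

theorem sum_map_val_add_eq_of_sum_map_sub {S : Multiset (Fin (r - 1))}
    (h : (S.map fun α : Fin (r - 1) => r - (α : ℕ)).sum = 2 * r + 2) :
    (S.map Fin.val).sum + (2 * r + 2) = r * Multiset.card S := by
  rw [← h, ← Multiset.sum_map_add, Multiset.map_congr rfl (g := fun _ => r) fun α _ =>
    Nat.add_sub_of_le (by omega)]
  simp [mul_comm]

theorem three_le_card_of_sum_map_sub {S : Multiset (Fin (r - 1))}
    (h : (S.map fun α : Fin (r - 1) => r - (α : ℕ)).sum = 2 * r + 2) : 3 ≤ Multiset.card S := by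
  have hw := sum_map_val_add_eq_of_sum_map_sub h
  by_contra! hS
  have := Nat.mul_le_mul_left r (show Multiset.card S ≤ 2 by omega)
  omega

/-- The arithmetic behind: the two largest entries `i ≥ j` of a multiset of weight `2r + 2` with
at least four entries satisfy `i + j ≥ r - 1`. -/
theorem Nat.sub_one_le_add_of_mul_le {r t i j u : ℕ} (hji : j ≤ i) (hu : u ≤ t * j) (ht : 2 ≤ t)
    (hw : r * t ≤ i + j + u + 2) : r - 1 ≤ i + j := by
  by_contra! h
  have h1 : i + j + 2 ≤ r := by omega
  nlinarith [Nat.mul_le_mul_left t (show 2 * j + 2 ≤ r by omega), Nat.mul_le_mul_left r ht]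

theorem eq_of_forall_mem_val_eq_one (hr : 3 ≤ r) {i j : Fin (r - 1)} {T : Multiset (Fin (r - 1))}
    (hT : ∀ x ∈ T, (x : ℕ) = 1) (hcard : 2 ≤ Multiset.card T)
    (hw : ((i ::ₘ j ::ₘ T).map Fin.val).sum + (2 * r + 2) = r * Multiset.card (i ::ₘ j ::ₘ T)) :
    i ::ₘ j ::ₘ T = {⟨r - 2, by omega⟩, ⟨r - 2, by omega⟩, ⟨1, by omega⟩, ⟨1, by omega⟩} := by
  have hTsum : (T.map Fin.val).sum = Multiset.card T := by
    rw [Multiset.map_congr rfl (g := fun _ => 1) hT]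
    simp
  have hi : (i : ℕ) + 2 ≤ r := by have := i.isLt; omega
  have hj : (j : ℕ) + 2 ≤ r := by have := j.isLt; omega
  simp only [Multiset.card_cons, Multiset.map_cons, Multiset.sum_cons, hTsum] at hw
  have hcard : Multiset.card T = 2 := by
    by_contra h
    have hc3 : 3 ≤ Multiset.card T := by omega
    nlinarith
  obtain ⟨x, y, rfl⟩ := Multiset.card_eq_two.1 hcard
  have hx := hT x (by simp)
  have hy := hT y (by simp)
  norm_num at hw
  have hN : r - 2 < r - 1 := by omega
  have h1 : 1 < r - 1 := by omega
  obtain rfl : i = ⟨r - 2, hN⟩ := Fin.eq_mk_iff_val_eq.2 (by omega)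
  obtain rfl : j = ⟨r - 2, hN⟩ := Fin.eq_mk_iff_val_eq.2 (by omega)
  obtain rfl : x = ⟨1, h1⟩ := Fin.eq_mk_iff_val_eq.2 hx
  obtain rfl : y = ⟨1, h1⟩ := Fin.eq_mk_iff_val_eq.2 hy
  rfl

variable {g : Multiset (Fin (r - 1)) → M} {n : ℕ}

theorem LinearizedWDVV.eq_zero_of_val_eq_zero_mem (hrel : LinearizedWDVV g n) (hn : 4 ≤ n)
    {S : Multiset (Fin (r - 1))} (hS : Multiset.card S = n)
    (hw : (S.map Fin.val).sum + (2 * r + 2) = r * Multiset.card S)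
    {z : Fin (r - 1)} (hz : (z : ℕ) = 0) (hzS : z ∈ S) : g S = 0 := by
  obtain ⟨T, rfl⟩ := Multiset.exists_cons_of_mem hzS
  obtain ⟨i, T, rfl, hi⟩ := Multiset.exists_eq_cons_forall_le (S := T)
    (by rintro rfl; simp at hS; omega)
  obtain ⟨j, m, rfl, hj⟩ := Multiset.exists_eq_cons_forall_le (S := T)
    (by rintro rfl; simp at hS; omega)
  have hji : j ≤ i := hi j (Multiset.mem_cons_self j m)
  simp only [Multiset.card_cons, Multiset.map_cons, Multiset.sum_cons, hz] at hS hw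
  have hij : r - 1 ≤ (i : ℕ) + j :=
    Nat.sub_one_le_add_of_mul_le (t := Multiset.card m + 1) hji
      ((Multiset.sum_map_val_le_card_mul hj).trans (Nat.mul_le_mul_right _ (Nat.le_succ _)))
      (by omega) (by nlinarith)
  have hα : r - 1 - j < r - 1 := by omega
  have hβ : i + j - (r - 1) < r - 1 := by omega
  -- Two of the four terms coincide and one has index `(r - 1 - j) + j = r - 1`.
  have hrel' := hrel m (by omega) ⟨r - 1 - j, hα⟩ ⟨i + j - (r - 1), hβ⟩ j z
  rw [hz, add_zero, add_zero, wdvvTerm_val, wdvvTerm_val,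
    show r - 1 - (j : ℕ) + (i + j - (r - 1)) = i by omega, wdvvTerm_val,
    wdvvTerm_of_le _ _ _ _ (by simp), add_zero, Multiset.cons_swap j ⟨_, hβ⟩] at hrel'
  rw [Multiset.cons_swap i j, Multiset.cons_swap z j]
  exact add_eq_left.1 hrel'

theorem LinearizedWDVV.eq_zero_of_forall_mem_pos (hrel : LinearizedWDVV g n) (hr : 3 ≤ r)
    (hn : 4 ≤ n)
    (hbase : g {⟨r - 2, by omega⟩, ⟨r - 2, by omega⟩, ⟨1, by omega⟩, ⟨1, by omega⟩} = 0)
    {S : Multiset (Fin (r - 1))} (hS : Multiset.card S = n)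
    (hw : (S.map Fin.val).sum + (2 * r + 2) = r * Multiset.card S)
    (hpos : ∀ x ∈ S, 1 ≤ (x : ℕ))
    (ih : ∀ S', Multiset.card S' = n → sqSum S < sqSum S' → g S' = 0) : g S = 0 := by
  obtain ⟨i, T, rfl, hi⟩ := Multiset.exists_eq_cons_forall_le (S := S)
    (by rintro rfl; simp at hS; omega)
  obtain ⟨j, T, rfl, hj⟩ := Multiset.exists_eq_cons_forall_le (S := T)
    (by rintro rfl; simp at hS; omega)
  obtain ⟨k, m, rfl, hk⟩ := Multiset.exists_eq_cons_forall_le (S := T)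
    (by rintro rfl; simp at hS; omega)
  have hji : (j : ℕ) ≤ i := hi j (by simp)
  have hkj : (k : ℕ) ≤ j := hj k (by simp)
  rcases (hpos k (by simp)).eq_or_lt with hk1 | hk2
  · refine (eq_of_forall_mem_val_eq_one hr (fun x hx => ?_) (by simp at hS ⊢; omega) hw) ▸ hbase
    rcases Multiset.mem_cons.1 hx with rfl | hx
    · exact hk1.symm
    · have : (x : ℕ) ≤ k := hk x hx
      have := hpos x (by simp [hx])
      omega
  simp only [Multiset.card_cons, Multiset.map_cons, Multiset.sum_cons] at hS hw
  have hij : r - 1 ≤ (i : ℕ) + j :=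
    Nat.sub_one_le_add_of_mul_le (t := Multiset.card m + 1) (u := k + (m.map Fin.val).sum) hji
      (by nlinarith [Nat.mul_le_mul_left (Multiset.card m) hkj,
        Multiset.sum_map_val_le_card_mul hk])
      (by omega) (by nlinarith)
  obtain ⟨k', hk'⟩ : ∃ k', (k : ℕ) = k' + 2 := ⟨k - 2, by omega⟩
  have hkr : (k : ℕ) - 1 < r - 1 := by omega
  have h1 : 1 < r - 1 := by omega
  have hlarger : ∀ a b c : Fin (r - 1), (i : ℕ) ^ 2 + j ^ 2 + k ^ 2 < a ^ 2 + b ^ 2 + c ^ 2 →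
      g (a ::ₘ b ::ₘ c ::ₘ m) = 0 := fun a b c h =>
    ih _ (by simp; omega) (by simp only [sqSum_cons]; omega)
  have hup : wdvvTerm g m ⟨1, h1⟩ i ((k : ℕ) - 1 + j) = 0 :=
    wdvvTerm_eq_zero fun _ => hlarger _ _ _ (by
      dsimp only
      rw [hk', show k' + 2 - 1 = k' + 1 by omega]
      nlinarith)
  have hup' : wdvvTerm g m ⟨k - 1, hkr⟩ j (1 + i) = 0 :=
    wdvvTerm_eq_zero fun _ => hlarger _ _ _ (by
      dsimp only
      rw [hk', show k' + 2 - 1 = k' + 1 by omega]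
      nlinarith)
  have hrel' := hrel m (by omega) ⟨1, h1⟩ ⟨k - 1, hkr⟩ i j
  rw [wdvvTerm_of_le _ _ _ _ hij, Fin.val_mk, Fin.val_mk, show 1 + ((k : ℕ) - 1) = k by omega,
    wdvvTerm_val, hup, hup', zero_add, add_zero] at hrel'
  exact hrel'

theorem LinearizedWDVV.eq_zero (hrel : LinearizedWDVV g n) (hr : 3 ≤ r) (hn : 4 ≤ n)
    (hwt : ∀ S, g S ≠ 0 → (S.map fun α : Fin (r - 1) => r - (α : ℕ)).sum = 2 * r + 2)
    (hbase : g {⟨r - 2, by omega⟩, ⟨r - 2, by omega⟩, ⟨1, by omega⟩, ⟨1, by omega⟩} = 0)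
    (S : Multiset (Fin (r - 1))) (hS : Multiset.card S = n) : g S = 0 := by
  suffices ∀ d S, Multiset.card S = n → n * (r - 2) ^ 2 - sqSum S = d → g S = 0 from
    this _ S hS rfl
  intro d
  induction d using Nat.strong_induction_on with
  | _ d ih =>
  intro S hS hd
  by_contra hg
  have hw := sum_map_val_add_eq_of_sum_map_sub (hwt S hg)
  by_cases h0 : ∃ z ∈ S, (z : ℕ) = 0
  · obtain ⟨z, hzS, hz⟩ := h0
    exact hg (hrel.eq_zero_of_val_eq_zero_mem hn hS hw hz hzS)
  · push Not at h0
    refine hg (hrel.eq_zero_of_forall_mem_pos hr hn hbase hS hw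
      (fun x hx => Nat.one_le_iff_ne_zero.2 (h0 x hx)) fun S' hS' hlt => ih _ ?_ S' hS' rfl)
    have := sqSum_le S'
    rw [hS', show r - 1 - 1 = r - 2 by omega] at this
    omega

end Combinatorics

/-- a polynomial `F ∈ ℚ[t_0,…,t_{r−2}]` satisfying the quasi-homogeneity
condition of weight `2r+2` (with `t_α` of weight `r−α`), the WDVV equations, the 3-point
initial conditions `∂³F/∂t_α∂t_β∂t_γ|₀ = δ_{α+β+γ,r−2}` and the 4-point initial condition
`∂⁴F/∂t_{r−2}²∂t_1²|₀ = 1/r` is unique: any two such polynomials are equal. -/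
theorem rspin_potential_unique
    (r : ℕ) (hr : 3 ≤ r)
    (F₁ F₂ : MvPolynomial (Fin (r - 1)) ℚ)
    (hhom : ∀ F ∈ ({F₁, F₂} : Set (MvPolynomial (Fin (r - 1)) ℚ)),
      ∀ m ∈ F.support, ∑ α : Fin (r - 1), (r - (α : ℕ)) * m α = 2 * r + 2)
    (hWDVV : ∀ F ∈ ({F₁, F₂} : Set (MvPolynomial (Fin (r - 1)) ℚ)),
      ∀ α β γ δ : Fin (r - 1),
        (∑ μ : Fin (r - 1), ∑ ν : Fin (r - 1),
          if (μ : ℕ) + (ν : ℕ) = r - 2 then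
            pderiv α (pderiv β (pderiv μ F)) * pderiv ν (pderiv γ (pderiv δ F))
          else 0)
        =
        (∑ μ : Fin (r - 1), ∑ ν : Fin (r - 1),
          if (μ : ℕ) + (ν : ℕ) = r - 2 then
            pderiv α (pderiv γ (pderiv μ F)) * pderiv ν (pderiv β (pderiv δ F))
          else 0))
    (h3pt : ∀ F ∈ ({F₁, F₂} : Set (MvPolynomial (Fin (r - 1)) ℚ)),
      ∀ α β γ : Fin (r - 1),
        MvPolynomial.constantCoeff (pderiv α (pderiv β (pderiv γ F))) =
          if (α : ℕ) + (β : ℕ) + (γ : ℕ) = r - 2 then 1 else 0)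
    (h4pt : ∀ F ∈ ({F₁, F₂} : Set (MvPolynomial (Fin (r - 1)) ℚ)),
      MvPolynomial.constantCoeff
        (pderiv (⟨r - 2, by omega⟩ : Fin (r - 1))
          (pderiv (⟨r - 2, by omega⟩ : Fin (r - 1))
            (pderiv (⟨1, by omega⟩ : Fin (r - 1))
              (pderiv (⟨1, by omega⟩ : Fin (r - 1)) F)))) = 1 / (r : ℚ)) :
    F₁ = F₂ := by
  have hmem₁ : F₁ ∈ ({F₁, F₂} : Set (MvPolynomial (Fin (r - 1)) ℚ)) := Set.mem_insert _ _
  have hmem₂ : F₂ ∈ ({F₁, F₂} : Set (MvPolynomial (Fin (r - 1)) ℚ)) := Set.mem_insert_of_mem _ rfl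
  have hwt : ∀ S, taylorCoeff S (F₁ - F₂) ≠ 0 →
      (S.map fun α : Fin (r - 1) => r - (α : ℕ)).sum = 2 * r + 2 := fun S =>
    sum_map_eq_of_taylorCoeff_sub_ne_zero (hhom F₁ hmem₁) (hhom F₂ hmem₂)
  have h4 : taylorCoeff {⟨r - 2, by omega⟩, ⟨r - 2, by omega⟩, ⟨1, by omega⟩, ⟨1, by omega⟩}
      (F₁ - F₂) = 0 := by
    simp only [Multiset.insert_eq_cons, ← Multiset.cons_zero,
      Multiset.cons_swap (⟨r - 2, _⟩ : Fin (r - 1)) ⟨1, _⟩, ← taylorCoeff_pderiv, taylorCoeff_zero,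
      map_sub, h4pt F₁ hmem₁, h4pt F₂ hmem₂, sub_self]
  refine sub_eq_zero.1 (eq_zero_of_forall_taylorCoeff_eq_zero fun S => ?_)
  suffices ∀ n S, Multiset.card S = n → taylorCoeff S (F₁ - F₂) = 0 from this _ S rfl
  intro n
  induction n using Nat.strong_induction_on with
  | _ n ih =>
  intro S hS
  obtain hn | rfl | hn := lt_trichotomy n 3
  · by_contra hS0
    exact absurd (three_le_card_of_sum_map_sub (hwt S hS0)) (by omega)
  · obtain ⟨x, y, z, rfl⟩ := Multiset.card_eq_three.1 hS
    simp only [taylorCoeff_triple, map_sub, h3pt F₁ hmem₁, h3pt F₂ hmem₂, sub_self]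
  · refine LinearizedWDVV.eq_zero ?_ hr hn hwt h4 S hS
    exact linearizedWDVV_taylorCoeff_sub (h3pt F₁ hmem₁) (h3pt F₂ hmem₂) (hWDVV F₁ hmem₁)
      (hWDVV F₂ hmem₂) fun T hT => ih _ hT T rfl
end
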